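/- arXiv:2209.14483 — 8 statements merged into one kernel-verified Lean document; each statement's English description precedes it below -/
import Mathlib

section
/- Let D ≥ 1 be an integer and let ψ be a single-edge strategy with choice distribution σ_ψ. Then for every Borel set A ⊆ [0,1] one has Λ(A)^D ≤ σ_ψ(A) ≤ 1 − (1 − Λ(A))^D. In particular σ_ψ and Λ are mutually absolutely continuous, and σ_ψ([0,y]) ≥ y^D for every y ∈ [0,1] (the choice of the strategy that always picks the maximum label stochastically dominates the choice of ψ). -/
open MeasureTheory Filter unitInterval
open scoped ENNReal Topology Classical

noncomputable def LamD (D : ℕ) : Measure (Fin D → unitInterval) :=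
  Measure.pi fun _ => (volume : Measure unitInterval)

def IsStrategyVec {D : ℕ} (p : (Fin D → unitInterval) → Fin D → ℝ) : Prop :=
  Measurable p ∧ (∀ u k, 0 ≤ p u k) ∧ (∀ u k, p u k ≤ 1) ∧ (∀ u, ∑ k, p u k = 1)

noncomputable def sigmaVec {D : ℕ} (p : (Fin D → unitInterval) → Fin D → ℝ) :
    Measure unitInterval :=
  ∑ k : Fin D, Measure.map (fun u => u k)
    ((LamD D).withDensity fun u => ENNReal.ofReal (p u k))

noncomputable def densityFn {D : ℕ} (p : (Fin D → unitInterval) → Fin D → ℝ)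
    (y : unitInterval) : ℝ :=
  ∑ k : Fin D, ∫ u, p (Function.update u k y) k ∂(LamD D)

def IsConsistent {D : ℕ} [NeZero D] (q : (Fin D → unitInterval) → Fin D → ℝ) : Prop :=
  (∀ u k, q u k = q (fun i => u (k + i)) 0) ∧
  (∀ u (ι : Equiv.Perm (Fin D)), ι 0 = 0 → q u 0 = q (fun i => u (ι i)) 0)

def strategyLaws (D : ℕ) : Set (Measure unitInterval) :=
  {m | ∃ p : (Fin D → unitInterval) → Fin D → ℝ, IsStrategyVec p ∧ m = sigmaVec p}

def IsExtremeLaw (D : ℕ) (m : Measure unitInterval) : Prop :=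
  m ∈ strategyLaws D ∧ ∀ m₁ ∈ strategyLaws D, ∀ m₂ ∈ strategyLaws D, ∀ t : ℝ,
    0 < t → t < 1 → m = ENNReal.ofReal t • m₁ + ENNReal.ofReal (1 - t) • m₂ → m₁ = m₂

def IsMPB (φ : unitInterval → unitInterval) : Prop :=
  Function.Bijective φ ∧ Measurable φ ∧ Measurable (Function.invFun φ) ∧
  ∀ B : Set unitInterval, MeasurableSet B → volume (φ '' B) = volume B

noncomputable def maxCoord (D : ℕ) (hD : 1 ≤ D) (u : Fin D → unitInterval) : unitInterval :=
  Finset.univ.sup' ⟨⟨0, hD⟩, Finset.mem_univ _⟩ u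

noncomputable def sigmaMax (D : ℕ) (hD : 1 ≤ D) : Measure unitInterval :=
  Measure.map (maxCoord D hD) (LamD D)

noncomputable def emp {D : ℕ} {Ω : Type*} (V : ℕ × Fin D → Ω → unitInterval)
    (ω : Ω) (n : ℕ) (π : Fin n → Fin D) : Measure unitInterval :=
  (n : ℝ≥0∞)⁻¹ • ∑ i : Fin n, Measure.dirac (V ((i : ℕ), π i) ω)

/-- bounds `Λ(A)^D ≤ σ_ψ(A) ≤ 1 − (1−Λ(A))^D`, mutual absolute continuity,
and stochastic domination by the max strategy. -/
theorem stmt0 (D : ℕ) (hD : 1 ≤ D)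
    (ψ : Measure ((Fin D → unitInterval) × Fin D)) [IsProbabilityMeasure ψ]
    (hmarg : ψ.map Prod.fst = LamD D)
    (sig : Measure unitInterval) (hsig : sig = ψ.map fun x => x.1 x.2) :
    (∀ A : Set unitInterval, MeasurableSet A →
      (volume A) ^ D ≤ sig A ∧ sig A ≤ 1 - (1 - volume A) ^ D) ∧
    sig ≪ (volume : Measure unitInterval) ∧ (volume : Measure unitInterval) ≪ sig ∧
    ∀ y : unitInterval, ENNReal.ofReal ((y : ℝ)) ^ D ≤ sig (Set.Iic y) := by
  have hev : Measurable fun x : (Fin D → unitInterval) × Fin D => x.1 x.2 :=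
    measurable_from_prod_countable_left fun j => measurable_pi_apply j
  have hLam : ∀ (B : Set unitInterval), MeasurableSet B →
      ψ (Prod.fst ⁻¹' Set.univ.pi fun _ : Fin D => B) = volume B ^ D := by
    intro B hB
    have hS : MeasurableSet (Set.univ.pi fun _ : Fin D => B) :=
      MeasurableSet.univ_pi fun _ => hB
    rw [← Measure.map_apply measurable_fst hS, hmarg, LamD, Measure.pi_pi]
    simp
  have main : ∀ A : Set unitInterval, MeasurableSet A →
      (volume A) ^ D ≤ sig A ∧ sig A ≤ 1 - (1 - volume A) ^ D := by
    intro A hA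
    have hsA : sig A = ψ ((fun x : (Fin D → unitInterval) × Fin D => x.1 x.2) ⁻¹' A) := by
      rw [hsig, Measure.map_apply hev hA]
    constructor
    · rw [hsA, ← hLam A hA]
      apply measure_mono
      intro x hx
      exact hx x.2 (Set.mem_univ _)
    · have hT : MeasurableSet (Set.univ.pi fun _ : Fin D => Aᶜ) :=
        MeasurableSet.univ_pi fun _ => hA.compl
      have hsub : ((fun x : (Fin D → unitInterval) × Fin D => x.1 x.2) ⁻¹' A) ⊆
          (Prod.fst ⁻¹' Set.univ.pi fun _ : Fin D => Aᶜ)ᶜ := by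
        intro x hx hcon
        exact hcon x.2 (Set.mem_univ _) hx
      have hcompl : ψ (Prod.fst ⁻¹' Set.univ.pi fun _ : Fin D => Aᶜ)ᶜ =
          1 - (1 - volume A) ^ D := by
        rw [measure_compl (measurable_fst hT) (measure_ne_top _ _), measure_univ,
          hLam _ hA.compl, measure_compl hA (measure_ne_top _ _), measure_univ]
      rw [hsA, ← hcompl]
      exact measure_mono hsub
  have hDne : D ≠ 0 := by omega
  refine ⟨main, ?_, ?_, ?_⟩
  · intro s hs
    have hsub := subset_toMeasurable volume s
    have h0 : volume (toMeasurable volume s) = 0 := by rw [measure_toMeasurable]; exact hs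
    have := (main _ (measurableSet_toMeasurable volume s)).2
    rw [h0] at this
    simp only [tsub_zero, one_pow, tsub_self] at this
    exact le_antisymm (le_trans (measure_mono hsub) this) zero_le
  · intro s hs
    have hsub := subset_toMeasurable sig s
    have h0 : sig (toMeasurable sig s) = 0 := by rw [measure_toMeasurable]; exact hs
    have := (main _ (measurableSet_toMeasurable sig s)).1
    rw [h0, le_zero_iff, pow_eq_zero_iff hDne] at this
    exact le_antisymm (le_trans (measure_mono hsub) this.le) zero_le
  · intro y
    have hvol : volume (Set.Iic y) = ENNReal.ofReal (y : ℝ) := by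
      rw [unitInterval.volume_def,
        MeasurableEmbedding.comap_apply (MeasurableEmbedding.subtype_coe measurableSet_Icc)]
      have himg : (Subtype.val '' Set.Iic y : Set ℝ) = Set.Icc 0 (y : ℝ) := by
        ext x
        constructor
        · rintro ⟨⟨a, ha⟩, hay, rfl⟩
          exact ⟨ha.1, hay⟩
        · rintro ⟨h0, hy⟩
          exact ⟨⟨x, h0, hy.trans y.2.2⟩, hy, rfl⟩
      rw [himg, Real.volume_Icc, sub_zero]
    have := (main (Set.Iic y) measurableSet_Iic).1
    rwa [hvol] at this
end

section
/- Let D ≥ 1 be an integer and let p be a single-edge strategy in vector form. Then for every Λ-measure-preserving bijection φ : [0,1] → [0,1], the mean of the scrambled choice distribution satisfies ∫_{[0,1]} x dσ_{p^φ}(x) ≤ ∫_{[0,1]} x dσ_MAX(x); consequently sup_φ ∫ x dσ_{p^φ} ≤ ∫ x dσ_MAX, the supremum being over all Λ-measure-preserving bijections φ. -/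
open MeasureTheory Filter unitInterval
open scoped ENNReal Topology Classical

lemma coe_maxCoord_eq (D : ℕ) (hD : 1 ≤ D) (u : Fin D → unitInterval) :
    ((maxCoord D hD u : ℝ)) =
      Finset.univ.sup' ⟨⟨0, hD⟩, Finset.mem_univ _⟩ (fun i => (u i : ℝ)) := by
  unfold maxCoord
  exact Finset.comp_sup'_eq_sup'_comp _ (fun x : unitInterval => (x : ℝ))
    (fun x y => (Subtype.strictMono_coe _).monotone.map_sup x y)

lemma maxCoord_measurable (D : ℕ) (hD : 1 ≤ D) : Measurable (maxCoord D hD) := by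
  have h : Measurable fun u : Fin D → unitInterval => ((maxCoord D hD u : ℝ)) := by
    simp_rw [coe_maxCoord_eq]
    have h2 : (fun u : Fin D → unitInterval =>
        Finset.univ.sup' ⟨⟨0, hD⟩, Finset.mem_univ _⟩ (fun i => (u i : ℝ)))
        = Finset.univ.sup' ⟨⟨0, hD⟩, Finset.mem_univ _⟩
            (fun i (u : Fin D → unitInterval) => (u i : ℝ)) := by
      funext u; exact (Finset.sup'_apply (C := fun _ => ℝ) _ (fun i (u : Fin D → unitInterval) => (u i : ℝ)) u).symm
    rw [h2]
    exact Finset.measurable_sup' _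
      (fun i _ => measurable_subtype_coe.comp (measurable_pi_apply i))
  exact h.subtype_mk

lemma coe_maxCoord (D : ℕ) (hD : 1 ≤ D) (u : Fin D → unitInterval) (k : Fin D) :
    (u k : ℝ) ≤ (maxCoord D hD u : ℝ) :=
  Subtype.coe_le_coe.2 (Finset.le_sup' u (Finset.mem_univ k))

lemma strategy_mean_le (D : ℕ) (hD : 1 ≤ D)
    (q : (Fin D → unitInterval) → Fin D → ℝ) (hq : IsStrategyVec q) :
    (∫ x, (x : ℝ) ∂(sigmaVec q)) ≤ ∫ x, (x : ℝ) ∂(sigmaMax D hD) := by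
  obtain ⟨hmeas, hnn, hle1, hsum⟩ := hq
  haveI hprob : IsProbabilityMeasure (LamD D) := by
    unfold LamD; infer_instance
  have hqk : ∀ k : Fin D, Measurable fun u => q u k :=
    fun k => (measurable_pi_apply k).comp hmeas
  have hfin : ∀ k : Fin D,
      IsFiniteMeasure ((LamD D).withDensity fun u => ENNReal.ofReal (q u k)) := by
    intro k
    constructor
    rw [withDensity_apply _ MeasurableSet.univ]
    calc ∫⁻ u in Set.univ, ENNReal.ofReal (q u k) ∂(LamD D)
        ≤ ∫⁻ _ in Set.univ, 1 ∂(LamD D) := by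
          apply lintegral_mono
          intro u
          exact ENNReal.ofReal_le_one.2 (hle1 u k)
      _ < ⊤ := by
          rw [Measure.restrict_univ, lintegral_one, measure_univ]
          exact ENNReal.one_lt_top
  have key : ∀ k : Fin D,
      (∫ x : unitInterval, (x : ℝ) ∂(Measure.map (fun u => u k)
        ((LamD D).withDensity fun u => ENNReal.ofReal (q u k)))) =
      ∫ u, q u k * (u k : ℝ) ∂(LamD D) := by
    intro k
    rw [integral_map (measurable_pi_apply k).aemeasurable
      measurable_subtype_coe.aestronglyMeasurable]
    have hd : (fun u : Fin D → unitInterval => ENNReal.ofReal (q u k)) =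
        fun u => ((q u k).toNNReal : ℝ≥0∞) := rfl
    rw [hd, integral_withDensity_eq_integral_smul
      (f := fun u => (q u k).toNNReal)
      (measurable_real_toNNReal.comp (hqk k))]
    congr 1
    ext u
    simp [NNReal.smul_def, Real.coe_toNNReal _ (hnn u k)]
  have hint : ∀ k : Fin D, Integrable (fun x : unitInterval => (x : ℝ))
      (Measure.map (fun u => u k)
        ((LamD D).withDensity fun u => ENNReal.ofReal (q u k))) := by
    intro k
    haveI := hfin k
    refine ⟨measurable_subtype_coe.aestronglyMeasurable,
      HasFiniteIntegral.of_bounded (C := 1) (Filter.Eventually.of_forall ?_)⟩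
    intro x
    rw [Real.norm_eq_abs, abs_of_nonneg x.2.1]
    exact x.2.2
  have hintk : ∀ k : Fin D, Integrable (fun u => q u k * (u k : ℝ)) (LamD D) := by
    intro k
    refine ⟨((hqk k).mul
      (measurable_subtype_coe.comp (measurable_pi_apply k))).aestronglyMeasurable,
      HasFiniteIntegral.of_bounded (C := 1) (Filter.Eventually.of_forall ?_)⟩
    intro u
    rw [Real.norm_eq_abs, abs_of_nonneg (mul_nonneg (hnn u k) (u k).2.1)]
    exact mul_le_one₀ (hle1 u k) (u k).2.1 (u k).2.2
  have hintmax : Integrable (fun u => ((maxCoord D hD u : ℝ))) (LamD D) := by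
    refine ⟨(measurable_subtype_coe.comp (maxCoord_measurable D hD)).aestronglyMeasurable,
      HasFiniteIntegral.of_bounded (C := 1) (Filter.Eventually.of_forall ?_)⟩
    intro u
    rw [Real.norm_eq_abs, abs_of_nonneg (maxCoord D hD u).2.1]
    exact (maxCoord D hD u).2.2
  calc (∫ x, (x : ℝ) ∂(sigmaVec q))
      = ∑ k : Fin D, ∫ x : unitInterval, (x : ℝ) ∂(Measure.map (fun u => u k)
          ((LamD D).withDensity fun u => ENNReal.ofReal (q u k))) := by
        rw [sigmaVec, integral_finset_sum_measure (fun k _ => hint k)]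
    _ = ∑ k : Fin D, ∫ u, q u k * (u k : ℝ) ∂(LamD D) :=
        Finset.sum_congr rfl fun k _ => key k
    _ = ∫ u, ∑ k : Fin D, q u k * (u k : ℝ) ∂(LamD D) :=
        (integral_finset_sum _ (fun k _ => hintk k)).symm
    _ ≤ ∫ u, ((maxCoord D hD u : ℝ)) ∂(LamD D) := by
        apply integral_mono (integrable_finset_sum _ (fun k _ => hintk k)) hintmax
        intro u
        calc ∑ k : Fin D, q u k * (u k : ℝ)
            ≤ ∑ k : Fin D, q u k * (maxCoord D hD u : ℝ) := by
              apply Finset.sum_le_sum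
              intro k _
              exact mul_le_mul_of_nonneg_left (coe_maxCoord D hD u k) (hnn u k)
          _ = (maxCoord D hD u : ℝ) := by rw [← Finset.sum_mul, hsum, one_mul]
    _ = ∫ x, (x : ℝ) ∂(sigmaMax D hD) := by
        rw [sigmaMax, integral_map (maxCoord_measurable D hD).aemeasurable
          measurable_subtype_coe.aestronglyMeasurable]

/-- the mean of any scrambled choice distribution is at most the mean of
`σ_MAX`, hence so is the supremum over all Λ-measure-preserving bijections. -/
theorem stmt1 (D : ℕ) (hD : 1 ≤ D)
    (p : (Fin D → unitInterval) → Fin D → ℝ) (hp : IsStrategyVec p) :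
    (∀ φ : unitInterval → unitInterval, IsMPB φ →
      (∫ x, (x : ℝ) ∂(sigmaVec fun u k => p (fun i => φ (u i)) k)) ≤
        ∫ x, (x : ℝ) ∂(sigmaMax D hD)) ∧
    sSup {m : ℝ | ∃ φ : unitInterval → unitInterval, IsMPB φ ∧
        m = ∫ x, (x : ℝ) ∂(sigmaVec fun u k => p (fun i => φ (u i)) k)} ≤
      ∫ x, (x : ℝ) ∂(sigmaMax D hD) := by
  have main : ∀ φ : unitInterval → unitInterval, IsMPB φ →
      (∫ x, (x : ℝ) ∂(sigmaVec fun u k => p (fun i => φ (u i)) k)) ≤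
        ∫ x, (x : ℝ) ∂(sigmaMax D hD) := by
    intro φ hφ
    apply strategy_mean_le
    refine ⟨?_, fun u k => hp.2.1 _ k, fun u k => hp.2.2.1 _ k, fun u => hp.2.2.2 _⟩
    exact hp.1.comp (measurable_pi_lambda _ fun i => hφ.2.1.comp (measurable_pi_apply i))
  refine ⟨main, Real.sSup_le ?_ (integral_nonneg fun x => x.2.1)⟩
  rintro m ⟨φ, hφ, rfl⟩
  exact main φ hφ
end

section
/- Let D ≥ 1 be an integer and let p be a single-edge strategy in vector form. Then σ_p is absolutely continuous with respect to Λ, and the function f_p(y) := Σ_{k=1}^D ∫_{[0,1]^{D−1}} p_k(u_1,…,u_{k−1}, y, u_{k+1},…,u_D) dΛ^{D−1}(u_1,…,û_k,…,u_D) is a density of σ_p with respect to Λ; moreover 0 ≤ f_p(y) ≤ D for all y ∈ [0,1]. -/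
open MeasureTheory Filter unitInterval
open scoped ENNReal Topology Classical

/-! Since the factors are probability measures, `(y, u) ↦ update u k y` pushes `μ k ⊗ Π μ` forward
to `Π μ`, so by Tonelli the law of the `k`-th coordinate under `Π μ` with density `g` has density
`y ↦ ∫ g (update u k y) du`. Summing over `k` identifies the density of `σ_p` with `f_p`, and
`0 ≤ p_k ≤ 1` gives `0 ≤ f_p ≤ D`. -/

open Function

section PiUpdate

variable {ι : Type*} [Fintype ι] [DecidableEq ι] {α : ι → Type*} [∀ i, MeasurableSpace (α i)]
  (μ : ∀ i, Measure (α i)) [∀ i, IsProbabilityMeasure (μ i)]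

theorem measurePreserving_update_pi (k : ι) :
    MeasurePreserving (fun z : α k × (∀ i, α i) => update z.2 k z.1)
      ((μ k).prod (Measure.pi μ)) (Measure.pi μ) := by
  have hm : Measurable fun z : α k × (∀ i, α i) => update z.2 k z.1 := by fun_prop
  refine ⟨hm, (Measure.pi_eq fun s hs => ?_).symm⟩
  have hpre : (fun z : α k × (∀ i, α i) => update z.2 k z.1) ⁻¹' Set.univ.pi s
      = s k ×ˢ Set.univ.pi (update s k Set.univ) := by
    ext ⟨y, u⟩
    simp only [Set.mem_preimage, Set.mem_pi, Set.mem_univ, true_implies, Set.mem_prod]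
    constructor
    · intro h
      refine ⟨by simpa using h k, fun i => ?_⟩
      rcases eq_or_ne i k with rfl | hi
      · simp
      · simpa [update_of_ne hi] using h i
    · rintro ⟨hy, hu⟩ i
      rcases eq_or_ne i k with rfl | hi
      · simpa using hy
      · simpa [update_of_ne hi] using hu i
  rw [Measure.map_apply hm (MeasurableSet.univ_pi hs), hpre,
    Measure.prod_prod, Measure.pi_pi, Fintype.prod_eq_mul_prod_compl k,
    Fintype.prod_eq_mul_prod_compl k]
  simp only [update_self, measure_univ, one_mul]
  congr 1
  exact Finset.prod_congr rfl fun i hi => by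
    rw [update_of_ne (by simpa using hi)]

theorem lintegral_pi_eq_lintegral_update (k : ι) {F : (∀ i, α i) → ℝ≥0∞} (hF : Measurable F) :
    ∫⁻ u, F u ∂Measure.pi μ = ∫⁻ y, ∫⁻ u, F (update u k y) ∂Measure.pi μ ∂μ k := by
  rw [← (measurePreserving_update_pi μ k).lintegral_comp hF]
  exact lintegral_prod _ (hF.comp (measurePreserving_update_pi μ k).measurable).aemeasurable

theorem map_eval_withDensity_pi (k : ι) {g : (∀ i, α i) → ℝ≥0∞} (hg : Measurable g) :
    ((Measure.pi μ).withDensity g).map (eval k)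
      = (μ k).withDensity fun y => ∫⁻ u, g (update u k y) ∂Measure.pi μ := by
  ext A hA
  have hA' : MeasurableSet (eval k ⁻¹' A) := measurable_pi_apply k hA
  rw [Measure.map_apply (measurable_pi_apply k) hA, withDensity_apply _ hA',
    withDensity_apply _ hA, ← lintegral_indicator hA', ← lintegral_indicator hA,
    lintegral_pi_eq_lintegral_update μ k (hg.indicator hA')]
  refine lintegral_congr fun y => ?_
  by_cases hy : y ∈ A <;> simp [Set.indicator, hy]

theorem measurable_lintegral_update_pi (k : ι) {g : (∀ i, α i) → ℝ≥0∞} (hg : Measurable g) :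
    Measurable fun y => ∫⁻ u, g (update u k y) ∂Measure.pi μ :=
  (hg.comp (measurable_update' (a := k) |>.comp (measurable_snd.prodMk measurable_fst))
    ).lintegral_prod_right'

end PiUpdate

theorem withDensity_fintype_sum {β ι : Type*} [MeasurableSpace β] [Fintype ι] (ν : Measure β)
    {f : ι → β → ℝ≥0∞} (hf : ∀ i, Measurable (f i)) :
    ν.withDensity (fun b => ∑ i, f i b) = ∑ i, ν.withDensity (f i) := by
  rw [← Measure.sum_fintype, ← withDensity_tsum hf]
  congr with b
  rw [ENNReal.tsum_apply, tsum_fintype]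

instance isProbabilityMeasure_LamD {D : ℕ} : IsProbabilityMeasure (LamD D) := by
  unfold LamD; infer_instance

namespace IsStrategyVec

variable {D : ℕ} {p : (Fin D → unitInterval) → Fin D → ℝ}

theorem measurable_apply (hp : IsStrategyVec p) (k : Fin D) : Measurable fun u => p u k :=
  (measurable_pi_apply k).comp hp.1

theorem integrable_update (hp : IsStrategyVec p) (k : Fin D) (y : unitInterval) :
    Integrable (fun u => p (update u k y) k) (LamD D) := by
  refine (integrable_const (1 : ℝ)).mono'
    ((hp.measurable_apply k).comp measurable_update_left).aestronglyMeasurable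
    (ae_of_all _ fun u => ?_)
  rw [Real.norm_eq_abs, abs_of_nonneg (hp.2.1 _ _)]
  exact hp.2.2.1 _ _

theorem densityFn_nonneg (hp : IsStrategyVec p) (y : unitInterval) : 0 ≤ densityFn p y :=
  Finset.sum_nonneg fun _ _ => integral_nonneg fun _ => hp.2.1 _ _

theorem densityFn_le (hp : IsStrategyVec p) (y : unitInterval) : densityFn p y ≤ D := by
  have hle_one (k : Fin D) : ∫ u, p (update u k y) k ∂LamD D ≤ 1 := by
    calc ∫ u, p (update u k y) k ∂LamD D ≤ ∫ _, (1 : ℝ) ∂LamD D :=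
          integral_mono (hp.integrable_update k y) (integrable_const 1) fun _ => hp.2.2.1 _ _
      _ = 1 := by simp
  calc densityFn p y ≤ ∑ _k : Fin D, (1 : ℝ) := Finset.sum_le_sum fun k _ => hle_one k
    _ = D := by simp

theorem ofReal_densityFn (hp : IsStrategyVec p) (y : unitInterval) :
    ENNReal.ofReal (densityFn p y)
      = ∑ k, ∫⁻ u, ENNReal.ofReal (p (update u k y) k) ∂LamD D := by
  rw [densityFn, ENNReal.ofReal_sum_of_nonneg fun _ _ => integral_nonneg fun _ => hp.2.1 _ _]
  exact Finset.sum_congr rfl fun k _ =>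
    ofReal_integral_eq_lintegral_ofReal (hp.integrable_update k y) (ae_of_all _ fun _ => hp.2.1 _ _)

theorem sigmaVec_eq_withDensity (hp : IsStrategyVec p) :
    sigmaVec p = volume.withDensity fun y => ENNReal.ofReal (densityFn p y) := by
  have hg (k : Fin D) : Measurable fun u => ENNReal.ofReal (p u k) :=
    ENNReal.measurable_ofReal.comp (hp.measurable_apply k)
  calc sigmaVec p
      = ∑ k, volume.withDensity fun y => ∫⁻ u, ENNReal.ofReal (p (update u k y) k) ∂LamD D :=
        Finset.sum_congr rfl fun k _ => map_eval_withDensity_pi _ k (hg k)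
    _ = volume.withDensity fun y => ∑ k, ∫⁻ u, ENNReal.ofReal (p (update u k y) k) ∂LamD D :=
        (withDensity_fintype_sum _ fun k => measurable_lintegral_update_pi _ k (hg k)).symm
    _ = volume.withDensity fun y => ENNReal.ofReal (densityFn p y) := by
        simp_rw [hp.ofReal_densityFn]

end IsStrategyVec

theorem stmt2_general (D : ℕ)
    (p : (Fin D → unitInterval) → Fin D → ℝ) (hp : IsStrategyVec p) :
    sigmaVec p ≪ (volume : Measure unitInterval) ∧
    sigmaVec p = (volume : Measure unitInterval).withDensity
      (fun y => ENNReal.ofReal (densityFn p y)) ∧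
    ∀ y : unitInterval, 0 ≤ densityFn p y ∧ densityFn p y ≤ D := by
  have hσ := hp.sigmaVec_eq_withDensity
  exact ⟨hσ ▸ withDensity_absolutelyContinuous _ _, hσ,
    fun y => ⟨hp.densityFn_nonneg y, hp.densityFn_le y⟩⟩

/-- `σ_p ≪ Λ` with density `f_p`, and `0 ≤ f_p ≤ D`. -/
theorem stmt2 (D : ℕ) (hD : 1 ≤ D)
    (p : (Fin D → unitInterval) → Fin D → ℝ) (hp : IsStrategyVec p) :
    sigmaVec p ≪ (volume : Measure unitInterval) ∧
    sigmaVec p = (volume : Measure unitInterval).withDensity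
      (fun y => ENNReal.ofReal (densityFn p y)) ∧
    ∀ y : unitInterval, 0 ≤ densityFn p y ∧ densityFn p y ≤ D :=
  stmt2_general D p hp
end

section
/- Let D ≥ 1 be an integer and let p be a single-edge strategy in vector form. Then there exists a consistent single-edge strategy q in vector form such that σ_q = σ_p and such that for every x ∈ [0,1] and every index k, f_p(x) = D · ∫_{[0,1]^{D−1}} q_k(u_1,…,u_{k−1}, x, u_{k+1},…,u_D) dΛ^{D−1}, where f_p(y) := Σ_{k=1}^D ∫_{[0,1]^{D−1}} p_k(u_1,…,u_{k−1}, y, u_{k+1},…,u_D) dΛ^{D−1}. -/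
open MeasureTheory Filter unitInterval
open scoped ENNReal Topology Classical

section Stmt3Aux

variable {D : ℕ}

instance LamD.instIsProbabilityMeasure : IsProbabilityMeasure (LamD D) := by
  unfold LamD; infer_instance

private lemma measurable_compPerm (π : Equiv.Perm (Fin D)) :
    Measurable (fun u : Fin D → unitInterval => u ∘ π) :=
  measurable_pi_lambda _ fun i => measurable_pi_apply (π i)

private lemma coe_permME (π : Equiv.Perm (Fin D)) :
    ⇑(MeasurableEquiv.piCongrLeft (fun _ : Fin D => unitInterval) π.symm) =
      fun u : Fin D → unitInterval => u ∘ π := by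
  funext u
  funext i
  rw [MeasurableEquiv.coe_piCongrLeft]
  conv_lhs => rw [show i = π.symm (π i) from (Equiv.symm_apply_apply _ _).symm]
  rw [Equiv.piCongrLeft_apply_apply]
  rfl

private lemma mp_compPerm (π : Equiv.Perm (Fin D)) :
    MeasurePreserving (fun u : Fin D → unitInterval => u ∘ π) (LamD D) (LamD D) := by
  have h := measurePreserving_piCongrLeft (fun _ : Fin D => (volume : Measure unitInterval)) π.symm
  rw [coe_permME π] at h
  exact h

private lemma me_compPerm (π : Equiv.Perm (Fin D)) :
    MeasurableEmbedding (fun u : Fin D → unitInterval => u ∘ π) := by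
  have h := (MeasurableEquiv.piCongrLeft (fun _ : Fin D => unitInterval) π.symm).measurableEmbedding
  rwa [coe_permME π] at h

/-- Symmetrization of a strategy over all permutations. -/
noncomputable def symQ (p : (Fin D → unitInterval) → Fin D → ℝ)
    (u : Fin D → unitInterval) (k : Fin D) : ℝ :=
  (D.factorial : ℝ)⁻¹ * ∑ π : Equiv.Perm (Fin D), p (u ∘ π) (π⁻¹ k)

private lemma card_perm_fin : Fintype.card (Equiv.Perm (Fin D)) = D.factorial := by
  simp [Fintype.card_perm]

private lemma symQ_comp (p : (Fin D → unitInterval) → Fin D → ℝ)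
    (u : Fin D → unitInterval) (s : Equiv.Perm (Fin D)) (k : Fin D) :
    symQ p (u ∘ s) k = symQ p u (s k) := by
  unfold symQ
  congr 1
  refine Fintype.sum_equiv (Equiv.mulLeft s) _ _ fun π => ?_
  have h1 : (u ∘ ⇑s) ∘ ⇑π = u ∘ ⇑(s * π) := by
    funext x; simp [Equiv.Perm.mul_apply]
  have h2 : (s * π)⁻¹ (s k) = π⁻¹ k := by
    simp [mul_inv_rev, Equiv.Perm.mul_apply]
  simp only [Equiv.coe_mulLeft, h1, h2]

private lemma hfact_ne : (D.factorial : ℝ) ≠ 0 :=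
  Nat.cast_ne_zero.mpr (Nat.factorial_ne_zero D)

private lemma symQ_isStrategy {p : (Fin D → unitInterval) → Fin D → ℝ}
    (hp : IsStrategyVec p) : IsStrategyVec (symQ p) := by
  obtain ⟨hm, h0, h1, hs⟩ := hp
  refine ⟨?_, ?_, ?_, ?_⟩
  · apply measurable_pi_lambda
    intro k
    apply Measurable.const_mul
    apply Finset.measurable_sum
    intro π _
    exact ((measurable_pi_apply (π⁻¹ k)).comp hm).comp (measurable_compPerm π)
  · intro u k
    exact mul_nonneg (by positivity) (Finset.sum_nonneg fun π _ => h0 _ _)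
  · intro u k
    have hb : ∑ π : Equiv.Perm (Fin D), p (u ∘ π) (π⁻¹ k) ≤ (D.factorial : ℝ) := by
      calc ∑ π : Equiv.Perm (Fin D), p (u ∘ π) (π⁻¹ k)
          ≤ ∑ _π : Equiv.Perm (Fin D), (1 : ℝ) := Finset.sum_le_sum fun π _ => h1 _ _
        _ = (D.factorial : ℝ) := by simp [card_perm_fin]
    calc symQ p u k ≤ (D.factorial : ℝ)⁻¹ * (D.factorial : ℝ) :=
          mul_le_mul_of_nonneg_left hb (by positivity)
      _ = 1 := inv_mul_cancel₀ hfact_ne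
  · intro u
    unfold symQ
    rw [← Finset.mul_sum, Finset.sum_comm]
    have : ∀ π : Equiv.Perm (Fin D),
        ∑ k, p (u ∘ π) (π⁻¹ k) = 1 := by
      intro π
      rw [Equiv.sum_comp (π⁻¹ : Equiv.Perm (Fin D)) (p (u ∘ π))]
      exact hs _
    rw [Finset.sum_congr rfl fun π _ => this π]
    simp [card_perm_fin, inv_mul_cancel₀ hfact_ne]

private lemma symQ_isConsistent [NeZero D] {p : (Fin D → unitInterval) → Fin D → ℝ} :
    IsConsistent (symQ p) := by
  constructor
  · intro u k
    have h : (fun i => u (k + i)) = u ∘ ⇑(Equiv.addLeft k : Equiv.Perm (Fin D)) := by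
      funext i; simp
    rw [h, symQ_comp]
    simp
  · intro u ι hι
    have h : (fun i => u (ι i)) = u ∘ ⇑ι := rfl
    rw [h, symQ_comp, hι]


private lemma sigmaVec_symQ {D : ℕ} {p : (Fin D → unitInterval) → Fin D → ℝ}
    (hp : IsStrategyVec p) : sigmaVec (symQ p) = sigmaVec p := by
  ext A hA
  set c : ℝ≥0∞ := ENNReal.ofReal ((D.factorial : ℝ)⁻¹) with hc
  set F : Fin D → ℝ≥0∞ := fun j =>
    ∫⁻ u in (fun v : Fin D → unitInterval => v j) ⁻¹' A, ENNReal.ofReal (p u j) ∂(LamD D)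
    with hF
  have expand : ∀ (r : (Fin D → unitInterval) → Fin D → ℝ) (k : Fin D),
      (Measure.map (fun u : Fin D → unitInterval => u k)
        ((LamD D).withDensity fun u => ENNReal.ofReal (r u k))) A
      = ∫⁻ u in (fun v : Fin D → unitInterval => v k) ⁻¹' A,
          ENNReal.ofReal (r u k) ∂(LamD D) := by
    intro r k
    rw [Measure.map_apply (measurable_pi_apply k) hA,
      withDensity_apply _ (measurable_pi_apply k hA)]
  have hmπ : ∀ (j : Fin D) (π : Equiv.Perm (Fin D)),
      Measurable fun u : Fin D → unitInterval => ENNReal.ofReal (p (u ∘ π) j) := fun j π =>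
    ENNReal.measurable_ofReal.comp (((measurable_pi_apply j).comp hp.1).comp (measurable_compPerm π))
  have step : ∀ (k : Fin D) (π : Equiv.Perm (Fin D)),
      (∫⁻ u in (fun v : Fin D → unitInterval => v k) ⁻¹' A,
        ENNReal.ofReal (p (u ∘ π) (π⁻¹ k)) ∂(LamD D)) = F (π⁻¹ k) := by
    intro k π
    have hset : (fun v : Fin D → unitInterval => v k) ⁻¹' A
        = (fun u : Fin D → unitInterval => u ∘ ⇑π) ⁻¹'
            ((fun v : Fin D → unitInterval => v (π⁻¹ k)) ⁻¹' A) := by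
      ext u
      simp [Equiv.apply_symm_apply]
    rw [hset, hF]
    exact (mp_compPerm π).setLIntegral_comp_preimage_emb (me_compPerm π) (fun v => ENNReal.ofReal (p v (π⁻¹ k))) _
  have hpt : ∀ (k : Fin D) (u : Fin D → unitInterval), ENNReal.ofReal (symQ p u k)
      = ∑ π : Equiv.Perm (Fin D), c * ENNReal.ofReal (p (u ∘ π) (π⁻¹ k)) := by
    intro k u
    rw [symQ, ENNReal.ofReal_mul (by positivity),
      ENNReal.ofReal_sum_of_nonneg fun π _ => hp.2.1 _ _, Finset.mul_sum]
  have keyk : ∀ k : Fin D,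
      (∫⁻ u in (fun v : Fin D → unitInterval => v k) ⁻¹' A,
        ENNReal.ofReal (symQ p u k) ∂(LamD D))
      = ∑ π : Equiv.Perm (Fin D), c * F (π⁻¹ k) := by
    intro k
    simp only [hpt]
    rw [lintegral_finset_sum _ fun π _ => (hmπ (π⁻¹ k) π).const_mul c]
    refine Finset.sum_congr rfl fun π _ => ?_
    rw [lintegral_const_mul c (hmπ (π⁻¹ k) π), step k π]
  have hcard : ((D.factorial : ℝ≥0∞)) * c = 1 := by
    rw [hc, show ((D.factorial : ℝ≥0∞)) = ENNReal.ofReal (D.factorial : ℝ) by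
        simp [ENNReal.ofReal_natCast],
      ← ENNReal.ofReal_mul (by positivity), mul_inv_cancel₀ hfact_ne, ENNReal.ofReal_one]
  rw [sigmaVec, sigmaVec, Measure.finset_sum_apply, Measure.finset_sum_apply]
  calc ∑ k : Fin D, (Measure.map (fun u : Fin D → unitInterval => u k)
        ((LamD D).withDensity fun u => ENNReal.ofReal (symQ p u k))) A
      = ∑ k : Fin D, ∑ π : Equiv.Perm (Fin D), c * F (π⁻¹ k) := by
        refine Finset.sum_congr rfl fun k _ => ?_
        rw [expand (symQ p) k, keyk k]
    _ = ∑ π : Equiv.Perm (Fin D), ∑ k : Fin D, c * F (π⁻¹ k) := Finset.sum_comm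
    _ = ∑ π : Equiv.Perm (Fin D), c * ∑ j : Fin D, F j := by
        refine Finset.sum_congr rfl fun π _ => ?_
        rw [← Finset.mul_sum]
        congr 1
        exact Equiv.sum_comp (π⁻¹ : Equiv.Perm (Fin D)) F
    _ = ∑ j : Fin D, F j := by
        rw [Finset.sum_const, Finset.card_univ, card_perm_fin, nsmul_eq_mul, ← mul_assoc,
          hcard, one_mul]
    _ = ∑ k : Fin D, (Measure.map (fun u : Fin D → unitInterval => u k)
        ((LamD D).withDensity fun u => ENNReal.ofReal (p u k))) A := by
        exact Finset.sum_congr rfl fun k _ => (expand p k).symm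

private lemma densityFn_symQ {D : ℕ} {p : (Fin D → unitInterval) → Fin D → ℝ}
    (hp : IsStrategyVec p) (x : unitInterval) (k : Fin D) :
    densityFn p x = D * ∫ u, symQ p (Function.update u k x) k ∂(LamD D) := by
  classical
  set h : Fin D → ℝ := fun j => ∫ v, p (Function.update v j x) j ∂(LamD D) with hh
  have hupd_meas : Measurable (fun u : Fin D → unitInterval => Function.update u k x) :=
    measurable_update_left
  have hupd : ∀ (π : Equiv.Perm (Fin D)) (u : Fin D → unitInterval),
      (Function.update u k x) ∘ ⇑π = Function.update (u ∘ ⇑π) (π⁻¹ k) x := by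
    intro π u
    funext i
    by_cases hi : i = π⁻¹ k
    · subst hi
      rw [Function.comp_apply, Equiv.Perm.coe_inv, Equiv.apply_symm_apply]
      simp
    · have hπ : π i ≠ k := by
        intro hcon
        apply hi
        rw [← hcon]
        simp
      simp [Function.update_apply, hi, hπ, show ¬ i = π.symm k from hi]
  have hmeasG : ∀ π : Equiv.Perm (Fin D),
      Measurable (fun u : Fin D → unitInterval =>
        p ((Function.update u k x) ∘ ⇑π) (π⁻¹ k)) := fun π =>
    ((measurable_pi_apply (π⁻¹ k)).comp hp.1).comp ((measurable_compPerm π).comp hupd_meas)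
  have hintG : ∀ π : Equiv.Perm (Fin D),
      Integrable (fun u : Fin D → unitInterval =>
        p ((Function.update u k x) ∘ ⇑π) (π⁻¹ k)) (LamD D) := by
    intro π
    refine Integrable.mono' (integrable_const (1 : ℝ)) (hmeasG π).aestronglyMeasurable
      (Filter.Eventually.of_forall fun u => ?_)
    rw [Real.norm_eq_abs, abs_le]
    exact ⟨by linarith [hp.2.1 ((Function.update u k x) ∘ ⇑π) (π⁻¹ k)], hp.2.2.1 _ _⟩
  have hint_eq : (∫ u, symQ p (Function.update u k x) k ∂(LamD D))
      = (D.factorial : ℝ)⁻¹ * ∑ π : Equiv.Perm (Fin D), h (π⁻¹ k) := by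
    simp only [symQ]
    rw [integral_const_mul]
    congr 1
    rw [integral_finset_sum _ fun π _ => hintG π]
    refine Finset.sum_congr rfl fun π _ => ?_
    have : (fun u : Fin D → unitInterval => p ((Function.update u k x) ∘ ⇑π) (π⁻¹ k))
        = fun u => p (Function.update (u ∘ ⇑π) (π⁻¹ k) x) (π⁻¹ k) := by
      funext u
      rw [hupd π u]
    rw [this]
    exact (mp_compPerm π).integral_comp (me_compPerm π)
      (fun v => p (Function.update v (π⁻¹ k) x) (π⁻¹ k))
  have hswap : ∀ m : Fin D,
      (∑ π : Equiv.Perm (Fin D), h (π m)) = ∑ π : Equiv.Perm (Fin D), h (π k) := by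
    intro m
    refine Fintype.sum_equiv (Equiv.mulRight (Equiv.swap k m)) _ _ fun π => ?_
    show h (π m) = h ((π * Equiv.swap k m) k)
    simp [Equiv.Perm.mul_apply]
  have hcount : (D : ℝ) * ∑ π : Equiv.Perm (Fin D), h (π k)
      = (D.factorial : ℝ) * ∑ j, h j := by
    have h1 : ∑ m : Fin D, ∑ π : Equiv.Perm (Fin D), h (π m)
        = (D : ℝ) * ∑ π : Equiv.Perm (Fin D), h (π k) := by
      rw [Finset.sum_congr rfl fun m _ => hswap m]
      simp [Finset.sum_const, nsmul_eq_mul]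
    have h2 : ∑ m : Fin D, ∑ π : Equiv.Perm (Fin D), h (π m)
        = ∑ π : Equiv.Perm (Fin D), ∑ m : Fin D, h (π m) := Finset.sum_comm
    have h3 : ∀ π : Equiv.Perm (Fin D), ∑ m : Fin D, h (π m) = ∑ j, h j := fun π =>
      Equiv.sum_comp (π : Equiv.Perm (Fin D)) h
    rw [← h1, h2, Finset.sum_congr rfl fun π _ => h3 π]
    simp [Finset.sum_const, card_perm_fin, nsmul_eq_mul]
  have hinv : ∑ π : Equiv.Perm (Fin D), h (π⁻¹ k) = ∑ π : Equiv.Perm (Fin D), h (π k) := by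
    refine Fintype.sum_equiv (Equiv.inv (Equiv.Perm (Fin D))) _ _ fun π => ?_
    simp
  have hdf : densityFn p x = ∑ j, h j := rfl
  rw [hdf, hint_eq, hinv]
  have hfac := hfact_ne (D := D)
  field_simp
  linarith [hcount]

end Stmt3Aux

/-- every choice distribution is achieved by a consistent single-edge strategy
whose coordinate integrals each recover `f_p / D`. -/
theorem stmt3 (D : ℕ) [NeZero D] (hD : 1 ≤ D)
    (p : (Fin D → unitInterval) → Fin D → ℝ) (hp : IsStrategyVec p) :
    ∃ q : (Fin D → unitInterval) → Fin D → ℝ, IsStrategyVec q ∧ IsConsistent q ∧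
      sigmaVec q = sigmaVec p ∧
      ∀ (x : unitInterval) (k : Fin D),
        densityFn p x = D * ∫ u, q (Function.update u k x) k ∂(LamD D) := by
  exact ⟨symQ p, symQ_isStrategy hp, symQ_isConsistent, sigmaVec_symQ hp,
    fun x k => densityFn_symQ hp x k⟩
end

section
/- Let (Ω, F, P) be a probability space, let ν be a Borel probability measure on [0,1], let ε > 0, and let ω ↦ μ_ω be a measurable map from Ω to the Borel probability measures on [0,1] (with the weak topology). Define the mean measure E[μ] by E[μ](A) = ∫_Ω μ_ω(A) dP(ω) for Borel A ⊆ [0,1]. If P({ω : ρ(μ_ω, ν) ≥ ε/2}) < ε/4, then ρ(E[μ], ν) < ε. -/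
open MeasureTheory Filter unitInterval
open scoped ENNReal Topology Classical

/-- if `μ_ω` is within `ε/2` of `ν` in Lévy–Prokhorov distance outside an event
of probability `< ε/4`, then the mean measure is within `ε` of `ν`. -/
theorem stmt5 {Ω : Type*} [MeasurableSpace Ω] (P : Measure Ω) [IsProbabilityMeasure P]
    (ν : Measure unitInterval) [IsProbabilityMeasure ν] (ε : ℝ) (hε : 0 < ε)
    (μ : Ω → Measure unitInterval) (hprob : ∀ ω, IsProbabilityMeasure (μ ω))
    (hmeas : ∀ A : Set unitInterval, MeasurableSet A → Measurable fun ω => μ ω A)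
    (ξ : Measure unitInterval)
    (hξ : ∀ A : Set unitInterval, MeasurableSet A → ξ A = ∫⁻ ω, μ ω A ∂P)
    (hsmall : P {ω | ε / 2 ≤ levyProkhorovDist (μ ω) ν} < ENNReal.ofReal (ε / 4)) :
    levyProkhorovDist ξ ν < ε := by
  have h34 : (0:ℝ) < 3 * ε / 4 := by linarith
  -- measurable hull of the bad set
  set S : Set Ω := {ω | ε / 2 ≤ levyProkhorovDist (μ ω) ν} with hS
  set S' : Set Ω := toMeasurable P S with hS'
  have hS'm : MeasurableSet S' := measurableSet_toMeasurable P S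
  have hPS' : P S' < ENNReal.ofReal (ε / 4) := by
    rwa [hS', measure_toMeasurable]
  have hGgood : ∀ ω ∈ S'ᶜ, levyProkhorovEDist (μ ω) ν < ENNReal.ofReal (ε / 2) := by
    intro ω hω
    have hω2 : ω ∉ S := fun h => hω (subset_toMeasurable P S h)
    have hlt : levyProkhorovDist (μ ω) ν < ε / 2 := lt_of_not_ge hω2
    have := hprob ω
    exact (ENNReal.lt_ofReal_iff_toReal_lt (levyProkhorovEDist_ne_top _ _)).2 hlt
  have key : levyProkhorovEDist ξ ν ≤ ENNReal.ofReal (3 * ε / 4) := by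
    apply levyProkhorovEDist_le_of_forall
    intro ε' B hε' hε'top hB
    have hε'ne : ε' ≠ ∞ := hε'top.ne
    have h34le : ENNReal.ofReal (3 * ε / 4) ≤ ε' := hε'.le
    have htoReal : 3 * ε / 4 ≤ ε'.toReal := by
      have := ENNReal.toReal_mono hε'ne h34le
      rwa [ENNReal.toReal_ofReal h34.le] at this
    have hhalf : ε / 2 ≤ ε'.toReal := by linarith
    have hth : ∀ m : Measure unitInterval,
        m (Metric.thickening ((ENNReal.ofReal (ε/2)).toReal) B)
          ≤ m (Metric.thickening ε'.toReal B) := by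
      intro m
      apply measure_mono
      apply Metric.thickening_mono
      rw [ENNReal.toReal_ofReal (by linarith : (0:ℝ) ≤ ε/2)]
      exact hhalf
    have hsum : ENNReal.ofReal (ε / 2) + ENNReal.ofReal (ε / 4)
        = ENNReal.ofReal (3 * ε / 4) := by
      rw [← ENNReal.ofReal_add (by linarith) (by linarith)]
      ring_nf
    have hthmeas : MeasurableSet (Metric.thickening ε'.toReal B) :=
      Metric.isOpen_thickening.measurableSet
    constructor
    · -- ξ B ≤ ν (thickening) + ε'
      rw [hξ B hB]
      rw [← MeasureTheory.lintegral_add_compl (fun ω => μ ω B) hS'm]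
      have h1 : ∫⁻ ω in S', μ ω B ∂P ≤ ENNReal.ofReal (ε / 4) := by
        calc ∫⁻ ω in S', μ ω B ∂P ≤ ∫⁻ _ in S', 1 ∂P := by
              apply setLIntegral_mono' hS'm
              intro ω _
              have := hprob ω
              exact prob_le_one
          _ = P S' := by simp
          _ ≤ ENNReal.ofReal (ε / 4) := hPS'.le
      have h2 : ∫⁻ ω in S'ᶜ, μ ω B ∂P
          ≤ ν (Metric.thickening ε'.toReal B) + ENNReal.ofReal (ε / 2) := by
        calc ∫⁻ ω in S'ᶜ, μ ω B ∂P
            ≤ ∫⁻ _ in S'ᶜ, (ν (Metric.thickening ε'.toReal B) + ENNReal.ofReal (ε/2)) ∂P := by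
              apply setLIntegral_mono' hS'm.compl
              intro ω hω
              have := left_measure_le_of_levyProkhorovEDist_lt (hGgood ω hω) hB
              exact this.trans (add_le_add_left (le_trans (hth ν) le_rfl) _)
          _ ≤ ν (Metric.thickening ε'.toReal B) + ENNReal.ofReal (ε/2) := by
              rw [setLIntegral_const]
              calc _ ≤ (ν (Metric.thickening ε'.toReal B) + ENNReal.ofReal (ε/2)) * 1 :=
                    mul_le_mul_right prob_le_one _
                _ = _ := mul_one _
      calc ∫⁻ ω in S', μ ω B ∂P + ∫⁻ ω in S'ᶜ, μ ω B ∂P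
          ≤ ENNReal.ofReal (ε/4) + (ν (Metric.thickening ε'.toReal B) + ENNReal.ofReal (ε/2)) :=
            add_le_add h1 h2
        _ = ν (Metric.thickening ε'.toReal B) + ENNReal.ofReal (3 * ε / 4) := by
            rw [← hsum]; ring
        _ ≤ ν (Metric.thickening ε'.toReal B) + ε' := add_le_add_right h34le _
    · -- ν B ≤ ξ (thickening) + ε'
      have hmth : Measurable fun ω => μ ω (Metric.thickening ε'.toReal B) :=
        hmeas _ hthmeas
      have hpt : ∀ ω ∈ S'ᶜ,
          ν B ≤ μ ω (Metric.thickening ε'.toReal B) + ENNReal.ofReal (ε/2) := by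
        intro ω hω
        have := right_measure_le_of_levyProkhorovEDist_lt (hGgood ω hω) hB
        exact this.trans (add_le_add_left (hth (μ ω)) _)
      have hint : ν B * P S'ᶜ
          ≤ ξ (Metric.thickening ε'.toReal B) + ENNReal.ofReal (ε/2) := by
        calc ν B * P S'ᶜ = ∫⁻ _ in S'ᶜ, ν B ∂P := by rw [setLIntegral_const]
          _ ≤ ∫⁻ ω in S'ᶜ, (μ ω (Metric.thickening ε'.toReal B) + ENNReal.ofReal (ε/2)) ∂P :=
              setLIntegral_mono' hS'm.compl hpt
          _ = ∫⁻ ω in S'ᶜ, μ ω (Metric.thickening ε'.toReal B) ∂P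
              + ENNReal.ofReal (ε/2) * P S'ᶜ := by
              rw [lintegral_add_right _ measurable_const, setLIntegral_const]
          _ ≤ ∫⁻ ω, μ ω (Metric.thickening ε'.toReal B) ∂P + ENNReal.ofReal (ε/2) := by
              gcongr
              · exact Measure.restrict_le_self
              · calc ENNReal.ofReal (ε/2) * P S'ᶜ ≤ ENNReal.ofReal (ε/2) * 1 :=
                    mul_le_mul_right prob_le_one _
                  _ = _ := mul_one _
          _ = ξ (Metric.thickening ε'.toReal B) + ENNReal.ofReal (ε/2) := by
              rw [hξ _ hthmeas]
      have hνB1 : ν B ≤ 1 := prob_le_one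
      calc ν B = ν B * (P S'ᶜ + P S') := by
            rw [add_comm, prob_add_prob_compl hS'm, mul_one]
        _ = ν B * P S'ᶜ + ν B * P S' := by ring
        _ ≤ (ξ (Metric.thickening ε'.toReal B) + ENNReal.ofReal (ε/2)) + ENNReal.ofReal (ε/4) := by
            apply add_le_add hint
            calc ν B * P S' ≤ 1 * P S' := mul_le_mul_left hνB1 _
              _ = P S' := one_mul _
              _ ≤ ENNReal.ofReal (ε/4) := hPS'.le
        _ = ξ (Metric.thickening ε'.toReal B) + ENNReal.ofReal (3 * ε / 4) := by
            rw [← hsum]; ring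
        _ ≤ ξ (Metric.thickening ε'.toReal B) + ε' := add_le_add_right h34le _
  have : levyProkhorovDist ξ ν ≤ 3 * ε / 4 := by
    have := ENNReal.toReal_mono ENNReal.ofReal_ne_top key
    rwa [ENNReal.toReal_ofReal h34.le] at this
  linarith
end

section
/- Let D ≥ 1 be an integer. The set {σ_p : p a single-edge strategy in vector form} is closed in the space of Borel probability measures on [0,1] equipped with the topology of weak convergence. -/
open MeasureTheory Filter unitInterval
open scoped ENNReal Topology Classical

section aux

open scoped RealInnerProductSpace

lemma lamD_prob (D : ℕ) : IsProbabilityMeasure (LamD D) := by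
  unfold LamD; infer_instance

lemma strat_meas_k {D : ℕ} {p : (Fin D → unitInterval) → Fin D → ℝ}
    (hp : IsStrategyVec p) (k : Fin D) : Measurable fun u => p u k :=
  (measurable_pi_apply k).comp hp.1

lemma withDensity_k_univ {D : ℕ} {p : (Fin D → unitInterval) → Fin D → ℝ}
    (hp : IsStrategyVec p) (k : Fin D) :
    ((LamD D).withDensity fun u => ENNReal.ofReal (p u k)) Set.univ ≤ 1 := by
  haveI := lamD_prob D
  rw [withDensity_apply _ MeasurableSet.univ, setLIntegral_univ]
  calc ∫⁻ u, ENNReal.ofReal (p u k) ∂(LamD D) ≤ ∫⁻ _, 1 ∂(LamD D) :=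
      lintegral_mono fun u => ENNReal.ofReal_le_one.mpr (hp.2.2.1 u k)
    _ = 1 := by simp

lemma withDensity_k_finite {D : ℕ} {p : (Fin D → unitInterval) → Fin D → ℝ}
    (hp : IsStrategyVec p) (k : Fin D) :
    IsFiniteMeasure ((LamD D).withDensity fun u => ENNReal.ofReal (p u k)) :=
  ⟨lt_of_le_of_lt (withDensity_k_univ hp k) ENNReal.one_lt_top⟩

lemma map_k_finite {D : ℕ} {p : (Fin D → unitInterval) → Fin D → ℝ}
    (hp : IsStrategyVec p) (k : Fin D) :
    IsFiniteMeasure (Measure.map (fun u => u k)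
      ((LamD D).withDensity fun u => ENNReal.ofReal (p u k))) := by
  constructor
  rw [Measure.map_apply (measurable_pi_apply k) MeasurableSet.univ]
  simpa using lt_of_le_of_lt (withDensity_k_univ hp k) ENNReal.one_lt_top

/-- Integral against `sigmaVec p` of a bounded measurable function. -/
lemma sigmaVec_integral {D : ℕ} {p : (Fin D → unitInterval) → Fin D → ℝ}
    (hp : IsStrategyVec p) {f : unitInterval → ℝ} (hf : Measurable f) {C : ℝ}
    (hfb : ∀ y, |f y| ≤ C) :
    ∫ y, f y ∂(sigmaVec p) = ∑ k, ∫ u, p u k * f (u k) ∂(LamD D) := by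
  haveI := lamD_prob D
  have hint : ∀ k : Fin D, Integrable f (Measure.map (fun u => u k)
      ((LamD D).withDensity fun u => ENNReal.ofReal (p u k))) := by
    intro k
    haveI := map_k_finite hp k
    exact memLp_one_iff_integrable.mp <|
      MemLp.of_bound hf.aestronglyMeasurable C
        (Eventually.of_forall fun y => by rw [Real.norm_eq_abs]; exact hfb y)
  rw [sigmaVec, integral_finset_sum_measure fun k _ => hint k]
  refine Finset.sum_congr rfl fun k _ => ?_
  rw [integral_map (measurable_pi_apply k).aemeasurable hf.aestronglyMeasurable]
  have hd : Measurable fun u => (p u k).toNNReal := (strat_meas_k hp k).real_toNNReal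
  have : ((LamD D).withDensity fun u => ENNReal.ofReal (p u k)) =
      (LamD D).withDensity fun u => ((fun u => (p u k).toNNReal) u : ℝ≥0∞) := rfl
  rw [this, integral_withDensity_eq_integral_smul hd]
  refine integral_congr_ae (Eventually.of_forall fun u => ?_)
  show (p u k).toNNReal • f (u k) = p u k * f (u k)
  rw [NNReal.smul_def, Real.coe_toNNReal _ (hp.2.1 u k), smul_eq_mul]

lemma sigmaVec_prob {D : ℕ} {p : (Fin D → unitInterval) → Fin D → ℝ}
    (hp : IsStrategyVec p) : IsProbabilityMeasure (sigmaVec p) := by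
  haveI := lamD_prob D
  constructor
  rw [sigmaVec, Measure.finset_sum_apply]
  have : ∀ k : Fin D, (Measure.map (fun u => u k)
      ((LamD D).withDensity fun u => ENNReal.ofReal (p u k))) Set.univ
      = ∫⁻ u, ENNReal.ofReal (p u k) ∂(LamD D) := by
    intro k
    rw [Measure.map_apply (measurable_pi_apply k) MeasurableSet.univ, Set.preimage_univ,
      withDensity_apply _ MeasurableSet.univ, setLIntegral_univ]
  simp_rw [this]
  rw [← lintegral_finset_sum _ fun k _ => (strat_meas_k hp k).ennreal_ofReal]
  have h1 : ∀ u, ∑ k : Fin D, ENNReal.ofReal (p u k) = 1 := by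
    intro u
    rw [← ENNReal.ofReal_sum_of_nonneg fun k _ => hp.2.1 u k, hp.2.2.2 u, ENNReal.ofReal_one]
  simp_rw [h1]
  simp

end aux

section main
open scoped RealInnerProductSpace

lemma weak_seq_compact {H : Type*} [NormedAddCommGroup H] [InnerProductSpace ℝ H]
    [CompleteSpace H] [SecondCountableTopology H]
    {D : ℕ} (x : ℕ → Fin D → H) {C : ℝ} (hC0 : 0 ≤ C) (hC : ∀ n k, ‖x n k‖ ≤ C) :
    ∃ φ : ℕ → ℕ, StrictMono φ ∧ ∃ y : Fin D → H,
      ∀ k (z : H), Tendsto (fun n => ⟪x (φ n) k, z⟫) atTop (𝓝 ⟪y k, z⟫) := by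
  haveI : Nonempty H := ⟨0⟩
  set e : ℕ → H := TopologicalSpace.denseSeq H with he_def
  have he : DenseRange e := TopologicalSpace.denseRange_denseSeq H
  set K : Set ((Fin D × ℕ) → ℝ) :=
    Set.univ.pi fun q => Set.Icc (-(C * ‖e q.2‖)) (C * ‖e q.2‖) with hK_def
  have hKc : IsCompact K := isCompact_univ_pi fun q => isCompact_Icc
  have hmem : ∀ n, (fun q : Fin D × ℕ => ⟪x n q.1, e q.2⟫) ∈ K := by
    intro n
    rw [Set.mem_univ_pi]
    intro q
    have h1 : |⟪x n q.1, e q.2⟫| ≤ C * ‖e q.2‖ := by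
      refine (abs_real_inner_le_norm _ _).trans ?_
      exact mul_le_mul_of_nonneg_right (hC n q.1) (norm_nonneg _)
    exact abs_le.mp h1
  obtain ⟨l, -, φ, hφ, hconv⟩ := hKc.tendsto_subseq hmem
  rw [tendsto_pi_nhds] at hconv
  -- Cauchy for every z
  have hcauchy : ∀ (k : Fin D) (z : H), CauchySeq (fun n => ⟪x (φ n) k, z⟫) := by
    intro k z
    rw [Metric.cauchySeq_iff]
    intro ε hε
    have hδ : 0 < ε / (4 * (C + 1)) := by positivity
    obtain ⟨i, hi⟩ := Metric.denseRange_iff.mp he z (ε / (4 * (C + 1))) hδ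
    have hcs : CauchySeq (fun n => ⟪x (φ n) k, e i⟫) := (hconv (k, i)).cauchySeq
    rw [Metric.cauchySeq_iff] at hcs
    obtain ⟨N, hN⟩ := hcs (ε / 2) (by positivity)
    refine ⟨N, fun m hm n hn => ?_⟩
    have key : ∀ j, |⟪x (φ j) k, z⟫ - ⟪x (φ j) k, e i⟫| ≤ C * (ε / (4 * (C + 1))) := by
      intro j
      rw [← inner_sub_right]
      refine (abs_real_inner_le_norm _ _).trans ?_
      have h2 : ‖z - e i‖ ≤ ε / (4 * (C + 1)) := by
        rw [← dist_eq_norm]; exact le_of_lt hi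
      exact mul_le_mul (hC (φ j) k) h2 (norm_nonneg _) hC0
    have hCe : C * (ε / (4 * (C + 1))) ≤ ε / 4 := by
      rw [mul_div_assoc']
      rw [div_le_div_iff₀ (by positivity) (by norm_num)]
      nlinarith [hε.le, hC0]
    have h3 := hN m hm n hn
    rw [Real.dist_eq] at h3 ⊢
    have := key m
    have := key n
    have habs : |⟪x (φ m) k, z⟫ - ⟪x (φ n) k, z⟫|
        ≤ |⟪x (φ m) k, z⟫ - ⟪x (φ m) k, e i⟫| + |⟪x (φ m) k, e i⟫ - ⟪x (φ n) k, e i⟫|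
          + |⟪x (φ n) k, e i⟫ - ⟪x (φ n) k, z⟫| := by
      have := abs_sub_le (⟪x (φ m) k, z⟫) (⟪x (φ m) k, e i⟫) (⟪x (φ n) k, z⟫)
      have h5 := abs_sub_le (⟪x (φ m) k, e i⟫) (⟪x (φ n) k, e i⟫) (⟪x (φ n) k, z⟫)
      linarith
    have h4 : |⟪x (φ n) k, e i⟫ - ⟪x (φ n) k, z⟫| = |⟪x (φ n) k, z⟫ - ⟪x (φ n) k, e i⟫| :=
      abs_sub_comm _ _
    rw [h4] at habs
    linarith [key m, key n]
  -- limits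
  have hlim : ∀ (k : Fin D) (z : H), ∃ a : ℝ, Tendsto (fun n => ⟪x (φ n) k, z⟫) atTop (𝓝 a) :=
    fun k z => cauchySeq_tendsto_of_complete (hcauchy k z)
  choose T hT using hlim
  have hbound : ∀ k z, ‖T k z‖ ≤ C * ‖z‖ := by
    intro k z
    have h1 : Tendsto (fun n => |⟪x (φ n) k, z⟫|) atTop (𝓝 |T k z|) := (hT k z).abs
    rw [Real.norm_eq_abs]
    refine le_of_tendsto h1 (Eventually.of_forall fun n => ?_)
    exact (abs_real_inner_le_norm _ _).trans
      (mul_le_mul_of_nonneg_right (hC (φ n) k) (norm_nonneg _))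
  have hadd : ∀ k (z w : H), T k (z + w) = T k z + T k w := by
    intro k z w
    refine tendsto_nhds_unique (hT k (z + w)) ?_
    have := (hT k z).add (hT k w)
    simpa [inner_add_right] using this
  have hsmul : ∀ k (c : ℝ) (z : H), T k (c • z) = c * T k z := by
    intro k c z
    refine tendsto_nhds_unique (hT k (c • z)) ?_
    have := (hT k z).const_mul c
    simpa [inner_smul_right] using this
  set ℓ : Fin D → (H →L[ℝ] ℝ) := fun k =>
    LinearMap.mkContinuous
      { toFun := T k, map_add' := hadd k, map_smul' := hsmul k } C (fun z => hbound k z)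
    with hℓ_def
  refine ⟨φ, hφ, fun k => (InnerProductSpace.toDual ℝ H).symm (ℓ k), fun k z => ?_⟩
  have : ⟪(InnerProductSpace.toDual ℝ H).symm (ℓ k), z⟫ = ℓ k z :=
    InnerProductSpace.toDual_symm_apply
  rw [this]
  exact hT k z

/-- the set of choice distributions of single-edge strategies is weakly closed. -/
theorem stmt6 (D : ℕ) (hD : 1 ≤ D) :
    IsClosed {μ : ProbabilityMeasure unitInterval |
      ∃ p : (Fin D → unitInterval) → Fin D → ℝ, IsStrategyVec p ∧
        (μ : Measure unitInterval) = sigmaVec p} := by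
  haveI := lamD_prob D
  haveI : Fact ((2:ℝ≥0∞) ≠ ∞) := ⟨by norm_num⟩
  set ν := LamD D with hν
  refine IsSeqClosed.isClosed ?_
  intro μs μ hmem hlim
  choose p hp hμp using hmem
  -- L² elements
  have hmk : ∀ n, ∀ k : Fin D, MemLp (fun u => p n u k) 2 ν := by
    intro n k
    refine MemLp.of_bound (strat_meas_k (hp n) k).aestronglyMeasurable 1
      (Eventually.of_forall fun u => ?_)
    rw [Real.norm_eq_abs, abs_le]
    exact ⟨by linarith [(hp n).2.1 u k], (hp n).2.2.1 u k⟩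
  set x : ℕ → Fin D → Lp ℝ 2 ν := fun n k => (hmk n k).toLp _ with hx
  have hxnorm : ∀ n k, ‖x n k‖ ≤ 1 := by
    intro n k
    have h1 : ∀ᵐ u ∂ν, ‖(x n k : (Fin D → unitInterval) → ℝ) u‖ ≤ 1 := by
      filter_upwards [(hmk n k).coeFn_toLp] with u hu
      rw [hu, Real.norm_eq_abs, abs_le]
      exact ⟨by linarith [(hp n).2.1 u k], (hp n).2.2.1 u k⟩
    have h2 := Lp.norm_le_of_ae_bound zero_le_one h1
    have h3 : measureUnivNNReal ν = 1 := by
      simp [measureUnivNNReal, measure_univ]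
    rw [h3] at h2
    simpa using h2
  haveI : MeasureTheory.IsSeparable ν := isSeparable_of_sigmaFinite ν
  obtain ⟨φ, hφ, y, hweak⟩ := weak_seq_compact x zero_le_one hxnorm
  set q : Fin D → (Fin D → unitInterval) → ℝ := fun k => (y k : (Fin D → unitInterval) → ℝ)
    with hqdef
  have hqmeas : ∀ k, Measurable (q k) := fun k => (Lp.stronglyMeasurable (y k)).measurable
  have hqint : ∀ k, Integrable (q k) ν := fun k =>
    memLp_one_iff_integrable.mp ((Lp.memLp (y k)).mono_exponent one_le_two)
  -- set-integral convergence along the subsequence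
  have hset : ∀ (k : Fin D) {s : Set (Fin D → unitInterval)}, MeasurableSet s →
      Tendsto (fun n => ∫ u in s, p (φ n) u k ∂ν) atTop (𝓝 (∫ u in s, q k u ∂ν)) := by
    intro k s hs
    set z : Lp ℝ 2 ν := indicatorConstLp 2 hs (measure_ne_top ν s) (1:ℝ) with hzdef
    have hz1 : ∀ g : Lp ℝ 2 ν, ⟪g, z⟫ = ∫ u in s, g u ∂ν := by
      intro g
      rw [real_inner_comm, hzdef, L2.inner_indicatorConstLp_eq_setIntegral_inner]
      simp
    have h1 : ∀ n, ⟪x (φ n) k, z⟫ = ∫ u in s, p (φ n) u k ∂ν := by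
      intro n
      rw [hz1]
      refine setIntegral_congr_ae hs ?_
      filter_upwards [(hmk (φ n) k).coeFn_toLp] with u hu _
      exact hu
    have h2 : ⟪y k, z⟫ = ∫ u in s, q k u ∂ν := hz1 _
    have := hweak k z
    rw [h2] at this
    refine this.congr fun n => h1 n
  -- total mass over any measurable set
  have hsum_s : ∀ {s : Set (Fin D → unitInterval)}, MeasurableSet s →
      ∑ k, ∫ u in s, q k u ∂ν = (ν s).toReal := by
    intro s hs
    have hble : Tendsto (fun n => ∑ k, ∫ u in s, p (φ n) u k ∂ν) atTop
        (𝓝 (∑ k, ∫ u in s, q k u ∂ν)) := tendsto_finset_sum _ fun k _ => hset k hs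
    have heq : ∀ n, ∑ k : Fin D, ∫ u in s, p (φ n) u k ∂ν = (ν s).toReal := by
      intro n
      rw [← integral_finset_sum _ fun k _ =>
        (memLp_one_iff_integrable.mp
          ((hmk (φ n) k).mono_exponent one_le_two)).integrableOn]
      rw [setIntegral_congr_fun hs (fun u _ => (hp (φ n)).2.2.2 u)]
      simp [Measure.real]
    rw [funext heq] at hble
    exact (tendsto_nhds_unique hble tendsto_const_nhds)
  -- a.e. properties of q
  have hq0 : ∀ k, ∀ᵐ u ∂ν, 0 ≤ q k u := by
    intro k
    have h := ae_nonneg_of_forall_setIntegral_nonneg (hqint k) ?_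
    · filter_upwards [h] with u hu using by simpa using hu
    · intro s hs _
      refine ge_of_tendsto (hset k hs) (Eventually.of_forall fun n => ?_)
      exact setIntegral_nonneg hs fun u _ => (hp (φ n)).2.1 u k
  have hq1 : ∀ k, ∀ᵐ u ∂ν, q k u ≤ 1 := by
    intro k
    have h := ae_nonneg_of_forall_setIntegral_nonneg
      ((integrable_const (1:ℝ)).sub (hqint k)) ?_
    · filter_upwards [h] with u hu
      have : (0:ℝ) ≤ 1 - q k u := by simpa using hu
      linarith
    · intro s hs _
      simp only [Pi.sub_apply]
      rw [integral_sub (integrable_const 1).integrableOn (hqint k).integrableOn]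
      have hle : ∫ u in s, q k u ∂ν ≤ (ν s).toReal := by
        refine le_of_tendsto (hset k hs) (Eventually.of_forall fun n => ?_)
        calc ∫ u in s, p (φ n) u k ∂ν ≤ ∫ _ in s, (1:ℝ) ∂ν := by
              refine setIntegral_mono_on (memLp_one_iff_integrable.mp
                ((hmk (φ n) k).mono_exponent one_le_two)).integrableOn
                (integrable_const _).integrableOn hs fun u _ => (hp (φ n)).2.2.1 u k
          _ = (ν s).toReal := by simp [Measure.real]
      have h1 : ∫ _ in s, (1:ℝ) ∂ν = (ν s).toReal := by simp [Measure.real]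
      rw [h1]
      linarith
  have hqsum : ∀ᵐ u ∂ν, ∑ k, q k u = 1 := by
    have hint : Integrable (fun u => ∑ k, q k u) ν := integrable_finset_sum _ fun k _ => hqint k
    have hs1 : ∀ᵐ u ∂ν, (0:ℝ) ≤ 1 - ∑ k, q k u := by
      have h := ae_nonneg_of_forall_setIntegral_nonneg
        ((integrable_const (1:ℝ)).sub hint) ?_
      · filter_upwards [h] with u hu using by simpa using hu
      · intro s hs _
        simp only [Pi.sub_apply]
        rw [integral_sub (integrable_const 1).integrableOn hint.integrableOn,
          integral_finset_sum _ fun k _ => (hqint k).integrableOn, hsum_s hs]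
        simp [Measure.real]
    have hs2 : ∀ᵐ u ∂ν, (0:ℝ) ≤ (∑ k, q k u) - 1 := by
      have h := ae_nonneg_of_forall_setIntegral_nonneg
        (hint.sub (integrable_const (1:ℝ))) ?_
      · filter_upwards [h] with u hu using by simpa using hu
      · intro s hs _
        simp only [Pi.sub_apply]
        rw [integral_sub hint.integrableOn (integrable_const 1).integrableOn,
          integral_finset_sum _ fun k _ => (hqint k).integrableOn, hsum_s hs]
        simp [Measure.real]
    filter_upwards [hs1, hs2] with u h1 h2
    linarith
  -- the good set
  set E : Set (Fin D → unitInterval) :=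
    {u | (∀ k, 0 ≤ q k u ∧ q k u ≤ 1) ∧ ∑ k, q k u = 1} with hEdef
  have hEmeas : MeasurableSet E := by
    rw [hEdef]
    have h1 : MeasurableSet {u : Fin D → unitInterval | ∀ k, 0 ≤ q k u ∧ q k u ≤ 1} := by
      rw [Set.setOf_forall]
      refine MeasurableSet.iInter fun k => ?_
      rw [Set.setOf_and]
      exact (measurableSet_le measurable_const (hqmeas k)).inter
        (measurableSet_le (hqmeas k) measurable_const)
    have h2 : MeasurableSet {u : Fin D → unitInterval | ∑ k, q k u = 1} :=
      measurableSet_eq_fun (Finset.measurable_sum _ fun k _ => hqmeas k) measurable_const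
    rw [Set.setOf_and]
    exact h1.inter h2
  have hEae : ∀ᵐ u ∂ν, u ∈ E := by
    have hall : ∀ᵐ u ∂ν, ∀ k : Fin D, 0 ≤ q k u ∧ q k u ≤ 1 :=
      ae_all_iff.mpr fun k => ((hq0 k).and (hq1 k))
    filter_upwards [hall, hqsum] with u h1 h2
    exact ⟨h1, h2⟩
  -- the limit strategy
  set pl : (Fin D → unitInterval) → Fin D → ℝ :=
    fun u => if u ∈ E then (fun k => q k u) else (fun _ => (D:ℝ)⁻¹) with hpldef
  have hD0 : (0:ℝ) < (D:ℝ) := by exact_mod_cast hD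
  have hplstrat : IsStrategyVec pl := by
    refine ⟨?_, ?_, ?_, ?_⟩
    · rw [measurable_pi_iff]
      intro k
      have heq : (fun u => pl u k) = fun u => if u ∈ E then q k u else (D:ℝ)⁻¹ := by
        funext u; by_cases hu : u ∈ E <;> simp [hpldef, hu]
      rw [heq]
      exact Measurable.ite hEmeas (hqmeas k) measurable_const
    · intro u k
      by_cases hu : u ∈ E
      · simp only [hpldef, hu, if_true]; exact (hu.1 k).1
      · simp only [hpldef, hu, if_false]; positivity
    · intro u k
      by_cases hu : u ∈ E
      · simp only [hpldef, hu, if_true]; exact (hu.1 k).2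
      · simp only [hpldef, hu, if_false]
        rw [inv_le_one_iff₀]
        right
        exact_mod_cast hD
    · intro u
      by_cases hu : u ∈ E
      · simp only [hpldef, hu, if_true]; exact hu.2
      · simp only [hpldef, hu, if_false, Finset.sum_const, Finset.card_univ, Fintype.card_fin,
          nsmul_eq_mul]
        exact mul_inv_cancel₀ hD0.ne'
  refine ⟨pl, hplstrat, ?_⟩
  haveI hσprob : IsProbabilityMeasure (sigmaVec pl) := sigmaVec_prob hplstrat
  have hlim2 : Tendsto (fun n => μs (φ n)) atTop (𝓝 μ) := hlim.comp hφ.tendsto_atTop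
  have hfabs : ∀ (f : BoundedContinuousFunction unitInterval ℝ) (t : unitInterval),
      |f t| ≤ ‖f‖ := by
    intro f t
    rw [← Real.norm_eq_abs]
    exact f.norm_coe_le_norm t
  have htend : Tendsto (fun n => μs (φ n)) atTop
      (𝓝 (⟨sigmaVec pl, hσprob⟩ : ProbabilityMeasure unitInterval)) := by
    refine ProbabilityMeasure.tendsto_iff_forall_integral_tendsto.mpr ?_
    intro f
    have hzmem : ∀ k : Fin D, MemLp (fun u : Fin D → unitInterval => f (u k)) 2 ν := fun k =>
      MemLp.of_bound ((f.continuous.measurable.comp (measurable_pi_apply k)).aestronglyMeasurable)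
        ‖f‖ (Eventually.of_forall fun u => f.norm_coe_le_norm _)
    set z : Fin D → Lp ℝ 2 ν := fun k => (hzmem k).toLp _ with hzdef
    have hinner : ∀ (g : Lp ℝ 2 ν) (k : Fin D), ⟪g, z k⟫ = ∫ u, (g : (Fin D → unitInterval) → ℝ) u * f (u k) ∂ν := by
      intro g k
      rw [L2.inner_def]
      refine integral_congr_ae ?_
      filter_upwards [(hzmem k).coeFn_toLp] with u hu
      have : (z k : (Fin D → unitInterval) → ℝ) u = f (u k) := hu
      rw [this]
      simp [RCLike.inner_apply, mul_comm]
    have hn : ∀ n, ∫ ω, f ω ∂(μs (φ n) : Measure unitInterval) = ∑ k, ⟪x (φ n) k, z k⟫ := by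
      intro n
      rw [hμp (φ n), sigmaVec_integral (hp (φ n)) f.continuous.measurable (hfabs f)]
      refine Finset.sum_congr rfl fun k _ => ?_
      rw [hinner (x (φ n) k) k]
      refine integral_congr_ae ?_
      filter_upwards [(hmk (φ n) k).coeFn_toLp] with u hu
      exact congrArg (fun t => t * f (u k)) hu.symm
    have hlimval : ∫ ω, f ω ∂(sigmaVec pl) = ∑ k, ⟪y k, z k⟫ := by
      rw [sigmaVec_integral hplstrat f.continuous.measurable (hfabs f)]
      refine Finset.sum_congr rfl fun k _ => ?_
      rw [hinner (y k) k]
      refine integral_congr_ae ?_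
      filter_upwards [hEae] with u hu
      have : pl u k = q k u := by simp [hpldef, hu]
      rw [this, hqdef]
    have hfin := tendsto_finset_sum (Finset.univ : Finset (Fin D))
      (fun k _ => hweak k (z k))
    rw [funext hn]
    show Tendsto _ atTop (𝓝 (∫ ω, f ω ∂((⟨sigmaVec pl, hσprob⟩ : ProbabilityMeasure unitInterval) : Measure unitInterval)))
    have hcoe : ((⟨sigmaVec pl, hσprob⟩ : ProbabilityMeasure unitInterval) : Measure unitInterval) = sigmaVec pl := rfl
    rw [hcoe, hlimval]
    exact hfin
  have hfinal : μ = (⟨sigmaVec pl, hσprob⟩ : ProbabilityMeasure unitInterval) :=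
    tendsto_nhds_unique hlim2 htend
  rw [hfinal]
  rfl

end main
end

section
/- Let (Z_i)_{i≥0} be i.i.d. real-valued random variables on a probability space with P(Z_0 ≤ 0) = 0, and let 0 < ε < 1. For each n ≥ 1 let Z_{0:n} ≤ Z_{1:n} ≤ … ≤ Z_{n−1:n} denote the order statistics (the nondecreasing rearrangement) of (Z_0,…,Z_{n−1}). Then there exist a constant C > 0 and N ∈ ℕ such that for all n ≥ N, (1/n)·Σ_{k=0}^{⌊nε⌋} E[Z_{k:n}] ≥ C, where the expectations are taken in [0,∞] (some may be infinite). -/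
open MeasureTheory Filter unitInterval
open scoped ENNReal Topology Classical

/-- The order statistics of `Z_0, …, Z_{n−1}`: `orderStat Z n k ω` is the `(k+1)`-th smallest
of the values `Z_0(ω), …, Z_{n−1}(ω)`. -/
noncomputable def orderStat {Ω : Type*} (Z : ℕ → Ω → ℝ) (n : ℕ) (k : Fin n) (ω : Ω) : ℝ :=
  (fun i : Fin n => Z i ω) (Tuple.sort (fun i : Fin n => Z i ω) k)

lemma orderStat_ge_aux {n : ℕ} (f : Fin n → ℝ) (δ : ℝ) (k : Fin n)
    (h : (Finset.univ.filter (fun i => f i < δ)).card ≤ (k : ℕ)) :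
    δ ≤ f (Tuple.sort f k) := by
  by_contra hlt
  push_neg at hlt
  have hmono := Tuple.monotone_sort f
  have hsub : ∀ j ∈ Finset.Iic k, Tuple.sort f j ∈ Finset.univ.filter (fun i => f i < δ) := by
    intro j hj
    simp only [Finset.mem_filter, Finset.mem_univ, true_and]
    exact lt_of_le_of_lt (hmono (Finset.mem_Iic.mp hj)) hlt
  have hcard := Finset.card_le_card_of_injOn _ hsub ((Tuple.sort f).injective.injOn)
  rw [Fin.card_Iic] at hcard
  omega

lemma key_est {Ω : Type*} [MeasurableSpace Ω] (P : Measure Ω) [IsProbabilityMeasure P]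
    (Z : ℕ → Ω → ℝ) (hmeas : ∀ i, Measurable (Z i)) (δ : ℝ) (hδ : 0 < δ)
    {n : ℕ} (k : Fin n)
    (hsum : ∑ i : Fin n, P {ω | Z i ω < δ} ≤ ENNReal.ofReal (1/2) * (((k:ℕ):ℝ≥0∞)+1)) :
    ENNReal.ofReal (δ/2) ≤ ∫⁻ ω, ENNReal.ofReal (orderStat Z n k ω) ∂P := by
  set S : Ω → ℕ := fun ω => (Finset.univ.filter (fun i : Fin n => Z i ω < δ)).card with hS
  have hAi : ∀ i : Fin n, MeasurableSet {ω | Z i ω < δ} :=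
    fun i => measurableSet_lt (hmeas i) measurable_const
  have hSeq : ∀ ω, ((S ω : ℝ≥0∞)) = ∑ i : Fin n, Set.indicator {ω' | Z i ω' < δ} (fun _ => (1:ℝ≥0∞)) ω := by
    intro ω
    rw [hS]
    simp only [Finset.card_filter]
    push_cast
    refine Finset.sum_congr rfl fun i _ => ?_
    simp [Set.indicator_apply]
  have hES : ∫⁻ ω, (S ω : ℝ≥0∞) ∂P = ∑ i : Fin n, P {ω | Z i ω < δ} := by
    simp only [hSeq]
    rw [lintegral_finset_sum _ (fun i _ => measurable_const.indicator (hAi i))]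
    simp only [lintegral_indicator_const (hAi _), one_mul]
  have hSmeas : Measurable fun ω => (S ω : ℝ≥0∞) := by
    simp only [hSeq]
    exact Finset.measurable_sum _ (fun i _ => measurable_const.indicator (hAi i))
  have hG : MeasurableSet {ω | S ω ≤ (k:ℕ)} := by
    have : {ω | S ω ≤ (k:ℕ)} = (fun ω => (S ω : ℝ≥0∞)) ⁻¹' (Set.Iic ((k:ℕ):ℝ≥0∞)) := by
      ext ω; simp [Nat.cast_le]
    rw [this]; exact hSmeas measurableSet_Iic
  have hM : P {ω | (k:ℕ) < S ω} ≤ ENNReal.ofReal (1/2) := by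
    have hset : {ω | (k:ℕ) < S ω} = {ω | (((k:ℕ):ℝ≥0∞)+1) ≤ (S ω : ℝ≥0∞)} := by
      ext ω
      simp only [Set.mem_setOf_eq]
      rw [show (((k:ℕ):ℝ≥0∞)+1) = (((k:ℕ)+1 : ℕ) : ℝ≥0∞) by push_cast; ring, Nat.cast_le]
      omega
    rw [hset]
    calc P {ω | (((k:ℕ):ℝ≥0∞)+1) ≤ (S ω : ℝ≥0∞)}
        ≤ (∫⁻ ω, (S ω : ℝ≥0∞) ∂P) / (((k:ℕ):ℝ≥0∞)+1) :=
          meas_ge_le_lintegral_div hSmeas.aemeasurable (by simp) (by simp)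
      _ ≤ ENNReal.ofReal (1/2) := by
          rw [ENNReal.div_le_iff_le_mul (Or.inl (by simp)) (Or.inl (by simp))]
          rw [hES]
          exact hsum
  have h1 : P {ω | S ω ≤ (k:ℕ)} + P {ω | (k:ℕ) < S ω} = 1 := by
    have hc : {ω | S ω ≤ (k:ℕ)}ᶜ = {ω | (k:ℕ) < S ω} := by ext ω; simp [not_le]
    rw [← hc, measure_add_measure_compl hG, measure_univ]
  have hGk : ENNReal.ofReal (1/2) ≤ P {ω | S ω ≤ (k:ℕ)} := by
    have h2 : (1:ℝ≥0∞) ≤ P {ω | S ω ≤ (k:ℕ)} + ENNReal.ofReal (1/2) := by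
      rw [← h1]; exact add_le_add_right hM _
    have h3 : ENNReal.ofReal (1/2) + ENNReal.ofReal (1/2) = 1 := by
      rw [← ENNReal.ofReal_add (by norm_num) (by norm_num)]; norm_num
    exact (ENNReal.add_le_add_iff_right ENNReal.ofReal_ne_top).mp (h3 ▸ h2)
  calc ENNReal.ofReal (δ/2) = ENNReal.ofReal δ * ENNReal.ofReal (1/2) := by
        rw [← ENNReal.ofReal_mul hδ.le, mul_one_div]
    _ ≤ ENNReal.ofReal δ * P {ω | S ω ≤ (k:ℕ)} := mul_le_mul_right hGk _
    _ = ∫⁻ ω, ({ω | S ω ≤ (k:ℕ)}).indicator (fun _ => ENNReal.ofReal δ) ω ∂P :=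
        (lintegral_indicator_const hG _).symm
    _ ≤ ∫⁻ ω, ENNReal.ofReal (orderStat Z n k ω) ∂P := by
        apply lintegral_mono
        intro ω
        rw [Set.indicator_apply]
        split_ifs with hω
        · exact ENNReal.ofReal_le_ofReal (orderStat_ge_aux (fun i => Z i ω) δ k hω)
        · exact zero_le
lemma stmt13_small_delta {Ω : Type*} [MeasurableSpace Ω] (P : Measure Ω) [IsProbabilityMeasure P]
    (Z : ℕ → Ω → ℝ) (hmeas : ∀ i, Measurable (Z i))
    (hpos : P {ω | Z 0 ω ≤ 0} = 0) (ε : ℝ) (hε0 : 0 < ε) :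
    ∃ δ : ℝ, 0 < δ ∧ P {ω | Z 0 ω < δ} ≤ ENNReal.ofReal (ε/4) := by
  set A : ℕ → Set Ω := fun m => {ω | Z 0 ω < 1/(m+1)} with hA
  have hAm : ∀ m, MeasurableSet (A m) := fun m => measurableSet_lt (hmeas 0) measurable_const
  have hanti : Antitone A := by
    intro m m' hmm ω hω
    simp only [hA, Set.mem_setOf_eq] at hω ⊢
    have hc : ((m:ℝ)+1) ≤ (m':ℝ)+1 := by exact_mod_cast add_le_add_left (Nat.cast_le.mpr hmm) 1
    refine lt_of_lt_of_le hω ?_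
    gcongr
  have hint : ⋂ m, A m = {ω | Z 0 ω ≤ 0} := by
    ext ω
    simp only [Set.mem_iInter, hA, Set.mem_setOf_eq]
    constructor
    · intro h
      by_contra hc
      push_neg at hc
      obtain ⟨m, hm⟩ := exists_nat_one_div_lt hc
      exact absurd (h m) (not_lt.mpr hm.le)
    · intro h m
      exact lt_of_le_of_lt h (by positivity)
  have htend : Tendsto (P ∘ A) atTop (nhds 0) := by
    have := MeasureTheory.tendsto_measure_iInter_atTop
      (μ := P) (fun m => (hAm m).nullMeasurableSet) hanti ⟨0, measure_ne_top _ _⟩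
    rwa [hint, hpos] at this
  have hev : ∀ᶠ m in atTop, P (A m) < ENNReal.ofReal (ε/4) := by
    apply (tendsto_order.mp htend).2
    simpa using ENNReal.ofReal_pos.mpr (by positivity)
  obtain ⟨m, hm⟩ := hev.exists
  exact ⟨1/(m+1), by positivity, hm.le⟩


/-- for i.i.d. a.s.-positive `Z_i` and `0 < ε < 1`, the averaged partial sums of
expectations of the lowest `⌊nε⌋+1` order statistics are bounded away from `0`. -/
theorem stmt13 {Ω : Type*} [MeasurableSpace Ω] (P : Measure Ω) [IsProbabilityMeasure P]
    (Z : ℕ → Ω → ℝ) (hmeas : ∀ i, Measurable (Z i))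
    (hindep : ProbabilityTheory.iIndepFun Z P)
    (hident : ∀ i, P.map (Z i) = P.map (Z 0))
    (hpos : P {ω | Z 0 ω ≤ 0} = 0)
    (ε : ℝ) (hε0 : 0 < ε) (hε1 : ε < 1) :
    ∃ C : ℝ, 0 < C ∧ ∃ N : ℕ, ∀ n ≥ N,
      ENNReal.ofReal C ≤
        (∑ k ∈ Finset.univ.filter (fun k : Fin n => (k : ℕ) ≤ ⌊(n : ℝ) * ε⌋₊),
          ∫⁻ ω, ENNReal.ofReal (orderStat Z n k ω) ∂P) / (n : ℝ≥0∞) := by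
  obtain ⟨δ, hδ, hp⟩ := stmt13_small_delta P Z hmeas hpos ε hε0
  have hpi : ∀ i : ℕ, P {ω | Z i ω < δ} ≤ ENNReal.ofReal (ε/4) := by
    intro i
    have h1 : P {ω | Z i ω < δ} = (P.map (Z i)) (Set.Iio δ) := by
      rw [Measure.map_apply (hmeas i) measurableSet_Iio]; rfl
    have h0 : P {ω | Z 0 ω < δ} = (P.map (Z 0)) (Set.Iio δ) := by
      rw [Measure.map_apply (hmeas 0) measurableSet_Iio]; rfl
    rw [h1, hident i, ← h0]; exact hp
  refine ⟨ε*δ/8, by positivity, ⌈4/ε⌉₊, fun n hn => ?_⟩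
  have hn4 : 4 ≤ (n:ℝ) * ε := (div_le_iff₀ hε0).mp (Nat.ceil_le.mp hn)
  have hnpos : 0 < (n:ℝ) := by nlinarith
  have hn0 : 0 < n := by exact_mod_cast hnpos
  set m := ⌊(n:ℝ)*ε⌋₊ with hm
  set a := ⌈(n:ℝ)*ε/2⌉₊ with ha
  have hnε0 : 0 ≤ (n:ℝ)*ε := by positivity
  have hm1 : (n:ℝ)*ε < m+1 := Nat.lt_floor_add_one _
  have hma : (a:ℝ) < (n:ℝ)*ε/2 + 1 := Nat.ceil_lt_add_one (by positivity)
  have hale : (n:ℝ)*ε/2 ≤ a := Nat.le_ceil _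
  have ham : (a:ℝ) < (m:ℝ) := by nlinarith
  have hamn : a < m := by exact_mod_cast ham
  have hmn : m < n := by
    have h1 : (m:ℝ) ≤ (n:ℝ)*ε := Nat.floor_le hnε0
    have h2 : (m:ℝ) < (n:ℝ) := by nlinarith
    exact_mod_cast h2
  set S' := Finset.univ.filter (fun k : Fin n => a ≤ (k:ℕ) ∧ (k:ℕ) ≤ m) with hS'
  have hsub : S' ⊆ Finset.univ.filter (fun k : Fin n => (k:ℕ) ≤ m) := by
    intro k hk
    simp only [hS', Finset.mem_filter, Finset.mem_univ, true_and] at hk ⊢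
    exact hk.2
  have himg : S'.image (fun k : Fin n => (k:ℕ)) = Finset.Icc a m := by
    ext x
    simp only [hS', Finset.mem_image, Finset.mem_filter, Finset.mem_univ, true_and, Finset.mem_Icc]
    constructor
    · rintro ⟨k, ⟨h1, h2⟩, rfl⟩; exact ⟨h1, h2⟩
    · rintro ⟨h1, h2⟩; exact ⟨⟨x, lt_of_le_of_lt h2 hmn⟩, ⟨h1, h2⟩, rfl⟩
  have hScard : S'.card = m + 1 - a := by
    rw [← Nat.card_Icc a m, ← himg, Finset.card_image_of_injective _ Fin.val_injective]
  have hcount : (n:ℝ)*ε/4 ≤ ((m + 1 - a : ℕ):ℝ) := by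
    rw [Nat.cast_sub (by omega)]
    push_cast
    nlinarith
  have hkey : ∀ k ∈ S', ENNReal.ofReal (δ/2) ≤ ∫⁻ ω, ENNReal.ofReal (orderStat Z n k ω) ∂P := by
    intro k hk
    simp only [hS', Finset.mem_filter, Finset.mem_univ, true_and] at hk
    apply key_est P Z hmeas δ hδ
    calc ∑ i : Fin n, P {ω | Z (i:ℕ) ω < δ}
        ≤ ∑ _i : Fin n, ENNReal.ofReal (ε/4) := Finset.sum_le_sum (fun i _ => hpi i)
      _ = (n : ℝ≥0∞) * ENNReal.ofReal (ε/4) := by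
          rw [Finset.sum_const, Finset.card_univ, Fintype.card_fin, nsmul_eq_mul]
      _ ≤ ENNReal.ofReal (1/2) * (((k:ℕ):ℝ≥0∞)+1) := by
          rw [← ENNReal.ofReal_natCast n, ← ENNReal.ofReal_mul (by positivity)]
          have hcast : (((k:ℕ):ℝ≥0∞)+1) = ENNReal.ofReal (((k:ℕ):ℝ)+1) := by
            rw [ENNReal.ofReal_add (by positivity) zero_le_one, ENNReal.ofReal_natCast,
              ENNReal.ofReal_one]
          rw [hcast, ← ENNReal.ofReal_mul (by norm_num)]
          apply ENNReal.ofReal_le_ofReal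
          have h1 : (n:ℝ)*ε/2 ≤ ((k:ℕ):ℝ) :=
            le_trans hale (by exact_mod_cast hk.1)
          nlinarith
  have hnne : ((n:ℕ):ℝ≥0∞) ≠ 0 := Nat.cast_ne_zero.mpr hn0.ne'
  rw [ENNReal.le_div_iff_mul_le (Or.inl hnne) (Or.inl (by simp))]
  calc ENNReal.ofReal (ε*δ/8) * (n : ℝ≥0∞)
      = ENNReal.ofReal (ε*δ/8 * n) := by
        rw [ENNReal.ofReal_mul (by positivity), ENNReal.ofReal_natCast]
    _ ≤ ENNReal.ofReal (((m+1-a:ℕ):ℝ) * (δ/2)) := ENNReal.ofReal_le_ofReal (by nlinarith)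
    _ = ((m+1-a:ℕ):ℝ≥0∞) * ENNReal.ofReal (δ/2) := by
        rw [ENNReal.ofReal_mul (by positivity), ENNReal.ofReal_natCast]
    _ = S'.card • ENNReal.ofReal (δ/2) := by rw [hScard, nsmul_eq_mul]
    _ ≤ ∑ k ∈ S', ∫⁻ ω, ENNReal.ofReal (orderStat Z n k ω) ∂P :=
        Finset.card_nsmul_le_sum _ _ _ hkey
    _ ≤ ∑ k ∈ Finset.univ.filter (fun k : Fin n => (k:ℕ) ≤ m),
          ∫⁻ ω, ENNReal.ofReal (orderStat Z n k ω) ∂P :=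
        Finset.sum_le_sum_of_subset hsub
end

section
/- Let D ≥ 1 be an integer and let τ : [0,1] → ℝ be a bounded measurable function. Then almost surely, lim_{n→∞} (1/n) · log( Σ_{π : Fin n → Fin D} exp( Σ_{i<n} τ(U_i^{π(i)}) ) ) = E[ log( Σ_{j∈Fin D} exp(τ(U_0^j)) ) ]; that is, the Gibbs Free Energy G(τ) in this model equals E[log Σ_{j=1}^D e^{τ(U^j)}] for U^1,…,U^D i.i.d. uniform on [0,1]. -/
open MeasureTheory Filter unitInterval
open scoped ENNReal Topology Classical

private lemma aux_indepX (D : ℕ) {Ω : Type*} [MeasurableSpace Ω] (P : Measure Ω)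
    (V : ℕ × Fin D → Ω → unitInterval) (hVmeas : ∀ q, Measurable (V q))
    (hVindep : ProbabilityTheory.iIndepFun V P)
    (F : (Fin D → unitInterval) → ℝ) (hFmeas : Measurable F)
    (i k : ℕ) (hik : i ≠ k) :
    ProbabilityTheory.IndepFun (fun ω => F (fun j => V (i,j) ω))
      (fun ω => F (fun j => V (k,j) ω)) P := by
  have hdisj : Disjoint
      (Finset.univ.map ⟨fun j : Fin D => (i, j), fun a b h => by simpa using h⟩)
      (Finset.univ.map ⟨fun j : Fin D => (k, j), fun a b h => by simpa using h⟩) := by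
    simp only [Finset.disjoint_left, Finset.mem_map, Function.Embedding.coeFn_mk]
    rintro q ⟨a, _, rfl⟩ ⟨b, _, hb⟩
    exact hik (congrArg Prod.fst hb).symm
  have hbase := hVindep.indepFun_finset _ _ hdisj hVmeas
  have h2 := hbase.comp
    (φ := fun v => F (fun j => v ⟨(i, j), Finset.mem_map_of_mem _ (Finset.mem_univ j)⟩))
    (ψ := fun v => F (fun j => v ⟨(k, j), Finset.mem_map_of_mem _ (Finset.mem_univ j)⟩))
    (hFmeas.comp (measurable_pi_lambda _ fun j => measurable_pi_apply _))
    (hFmeas.comp (measurable_pi_lambda _ fun j => measurable_pi_apply _))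
  exact h2

private lemma aux_rowlaw (D : ℕ) {Ω : Type*} [MeasurableSpace Ω] (P : Measure Ω)
    [IsProbabilityMeasure P]
    (V : ℕ × Fin D → Ω → unitInterval) (hVmeas : ∀ q, Measurable (V q))
    (hVindep : ProbabilityTheory.iIndepFun V P)
    (hVunif : ∀ q, P.map (V q) = (volume : Measure unitInterval)) (i : ℕ) :
    P.map (fun ω j => V (i, j) ω) =
      Measure.pi (fun _ : Fin D => (volume : Measure unitInterval)) := by
  have hRmeas : Measurable (fun ω j => V (i, j) ω) :=
    measurable_pi_lambda _ fun j => hVmeas _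
  refine (Measure.pi_eq ?_).symm
  intro s hs
  rw [Measure.map_apply hRmeas (MeasurableSet.univ_pi hs)]
  have hset : (fun ω j => V (i, j) ω) ⁻¹' (Set.pi Set.univ s) =
      ⋂ q ∈ (Finset.univ.map ⟨fun j : Fin D => (i, j), fun a b h => by
        simpa using h⟩ : Finset (ℕ × Fin D)), V q ⁻¹' s q.2 := by
    ext ω
    simp [Set.mem_pi]
    exact Iff.rfl
  rw [hset,
    hVindep.measure_inter_preimage_eq_mul _ (sets := fun q : ℕ × Fin D => s q.2)
      (fun q _ => hs q.2)]
  rw [Finset.prod_map]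
  refine Finset.prod_congr rfl fun j _ => ?_
  show P (V (i, j) ⁻¹' s j) = volume (s j)
  rw [← Measure.map_apply (hVmeas _) (hs j), hVunif]


/-- the Gibbs Free Energy equals `E[log ∑_j e^{τ(U_0^j)}]` almost surely. -/
theorem stmt15 (D : ℕ) (hD : 1 ≤ D) {Ω : Type*} [MeasurableSpace Ω] (P : Measure Ω)
    [IsProbabilityMeasure P]
    (V : ℕ × Fin D → Ω → unitInterval) (hVmeas : ∀ q, Measurable (V q))
    (hVindep : ProbabilityTheory.iIndepFun V P)
    (hVunif : ∀ q, P.map (V q) = (volume : Measure unitInterval))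
    (τ : unitInterval → ℝ) (hτmeas : Measurable τ) (hτbdd : ∃ M : ℝ, ∀ y, |τ y| ≤ M) :
    ∀ᵐ ω ∂P, Tendsto
      (fun n : ℕ => (1 / (n : ℝ)) * Real.log
        (∑ π : Fin n → Fin D, Real.exp (∑ i : Fin n, τ (V ((i : ℕ), π i) ω))))
      atTop
      (nhds (∫ ω', Real.log (∑ j : Fin D, Real.exp (τ (V (0, j) ω'))) ∂P)) := by
  
  have hFin : Nonempty (Fin D) := ⟨⟨0, hD⟩⟩
  obtain ⟨M, hM⟩ := hτbdd
  have hFmeas : Measurable (fun v : Fin D → unitInterval =>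
      Real.log (∑ j, Real.exp (τ (v j)))) := by
    apply Measurable.log
    exact Finset.measurable_sum _ fun j _ =>
      (Real.measurable_exp.comp (hτmeas.comp (measurable_pi_apply j)))
  have hXmeas : ∀ i : ℕ, Measurable (fun ω =>
      Real.log (∑ j, Real.exp (τ (V (i, j) ω)))) := fun i =>
    hFmeas.comp (measurable_pi_lambda _ fun j => hVmeas _)
  have hpos : ∀ v : Fin D → unitInterval, 0 < ∑ j, Real.exp (τ (v j)) := fun v =>
    Finset.sum_pos (fun j _ => Real.exp_pos _) Finset.univ_nonempty
  have hFbdd : ∀ v : Fin D → unitInterval,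
      |Real.log (∑ j, Real.exp (τ (v j)))| ≤ Real.log D + M := by
    intro v
    set j0 : Fin D := ⟨0, hD⟩
    have hM0 : 0 ≤ M := le_trans (abs_nonneg _) (hM (v j0))
    have hD0 : (0:ℝ) ≤ Real.log D := Real.log_nonneg (by exact_mod_cast hD)
    rw [abs_le]
    constructor
    · have h1 : Real.exp (-M) ≤ ∑ j, Real.exp (τ (v j)) := by
        calc Real.exp (-M) ≤ Real.exp (τ (v j0)) := by
              apply Real.exp_le_exp.2
              have := hM (v j0); rw [abs_le] at this; linarith [this.1]
          _ ≤ ∑ j, Real.exp (τ (v j)) :=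
              Finset.single_le_sum (f := fun j : Fin D => Real.exp (τ (v j)))
                (fun j _ => (Real.exp_pos _).le) (Finset.mem_univ j0)
      have := Real.log_le_log (Real.exp_pos _) h1
      rw [Real.log_exp] at this
      linarith
    · have h2 : ∑ j, Real.exp (τ (v j)) ≤ D * Real.exp M := by
        calc ∑ j, Real.exp (τ (v j)) ≤ ∑ _j : Fin D, Real.exp M := by
              apply Finset.sum_le_sum
              intro j _
              apply Real.exp_le_exp.2
              have := hM (v j); rw [abs_le] at this; linarith [this.2]
          _ = D * Real.exp M := by simp [mul_comm]
      have := Real.log_le_log (hpos v) h2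
      rw [Real.log_mul (by positivity) (Real.exp_ne_zero _), Real.log_exp] at this
      linarith
  have hident : ∀ i : ℕ, ProbabilityTheory.IdentDistrib
      (fun ω => Real.log (∑ j, Real.exp (τ (V (i, j) ω))))
      (fun ω => Real.log (∑ j, Real.exp (τ (V (0, j) ω)))) P P := by
    intro i
    have hRlaw_i := aux_rowlaw D P V hVmeas hVindep hVunif i
    have hRlaw_0 := aux_rowlaw D P V hVmeas hVindep hVunif 0
    have hRid : ProbabilityTheory.IdentDistrib (fun ω j => V (i, j) ω)
        (fun ω j => V (0, j) ω) P P :=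
      ⟨(measurable_pi_lambda _ fun j => hVmeas _).aemeasurable,
       (measurable_pi_lambda _ fun j => hVmeas _).aemeasurable,
       by rw [hRlaw_i, hRlaw_0]⟩
    exact hRid.comp hFmeas
  have hindep : Pairwise (Function.onFun (ProbabilityTheory.IndepFun · · P)
      (fun (i : ℕ) ω => Real.log (∑ j, Real.exp (τ (V (i, j) ω))))) :=
    fun i k hik => aux_indepX D P V hVmeas hVindep _ hFmeas i k hik
  have hint : Integrable (fun ω => Real.log (∑ j, Real.exp (τ (V (0, j) ω)))) P :=
    ⟨(hXmeas 0).aestronglyMeasurable,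
      HasFiniteIntegral.of_bounded (C := Real.log D + M) (ae_of_all _ fun ω => hFbdd _)⟩
  have hSLLN := ProbabilityTheory.strong_law_ae_real
    (fun (i : ℕ) ω => Real.log (∑ j, Real.exp (τ (V (i, j) ω)))) hint hindep hident
  filter_upwards [hSLLN] with ω hω
  have key : ∀ n : ℕ,
      (1 / (n : ℝ)) * Real.log
        (∑ π : Fin n → Fin D, Real.exp (∑ i : Fin n, τ (V ((i : ℕ), π i) ω)))
      = (∑ i ∈ Finset.range n, Real.log (∑ j, Real.exp (τ (V (i, j) ω)))) / n := by
    intro n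
    have hfac : (∑ π : Fin n → Fin D, Real.exp (∑ i : Fin n, τ (V ((i : ℕ), π i) ω)))
        = ∏ i : Fin n, ∑ j : Fin D, Real.exp (τ (V ((i : ℕ), j) ω)) := by
      rw [Fintype.prod_sum (f := fun (i : Fin n) (j : Fin D) => Real.exp (τ (V ((i:ℕ), j) ω)))]
      exact Finset.sum_congr rfl fun π _ => by rw [Real.exp_sum]
    rw [hfac, Real.log_prod (s := Finset.univ)
        (f := fun i : Fin n => ∑ j : Fin D, Real.exp (τ (V ((i:ℕ), j) ω)))
        (fun i _ => (hpos fun j => V ((i:ℕ), j) ω).ne'),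
      one_div, inv_mul_eq_div]
    congr 1
    rw [← Fin.sum_univ_eq_sum_range
      (fun i => Real.log (∑ j, Real.exp (τ (V (i, j) ω)))) n]
  simpa only [key] using hω
end
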